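/- arXiv:1407.7507 — 7 statements merged into one kernel-verified Lean document; each statement's English description precedes it below -/
import Mathlib

section
/- In a finite lattice that is both meet-semidistributive and upper semimodular (i.e., join-distributive), for any elements p, p1, p2 with p covered by both p1 and p2, the interval [p, p1 ∨ p2] consists of exactly the four elements p, p1, p2, and p1 ∨ p2. -/
/-- A lattice is meet-semidistributive if `p ⊓ q = p ⊓ r` implies `p ⊓ q = p ⊓ (q ⊔ r)`. -/
def MeetSemidistrib (α : Type*) [Lattice α] : Prop :=
  ∀ p q r : α, p ⊓ q = p ⊓ r → p ⊓ q = p ⊓ (q ⊔ r)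

/-- A lattice is upper semimodular if whenever `p ⊓ q` is covered by both `p` and `q`,
then `p ⊔ q` covers both `p` and `q`. -/
def UpperSemimodular (α : Type*) [Lattice α] : Prop :=
  ∀ p q : α, (p ⊓ q) ⋖ p → (p ⊓ q) ⋖ q → (p ⋖ (p ⊔ q) ∧ q ⋖ (p ⊔ q))

private lemma cov_eq {α : Type*} [Lattice α] {a b x : α} (h : a ⋖ b)
    (h1 : a < x) (h2 : x ≤ b) : x = b :=
  (h2.lt_or_eq).resolve_left (h.2 h1)

/-- In a finite join-distributive lattice, if `p ⋖ p₁` and `p ⋖ p₂`, then the interval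
`[p, p₁ ⊔ p₂]` consists exactly of the elements `p`, `p₁`, `p₂` and `p₁ ⊔ p₂`. -/
theorem stmt0 {α : Type*} [Lattice α] [Fintype α]
    (hmsd : MeetSemidistrib α) (husm : UpperSemimodular α)
    (p p₁ p₂ : α) (h1 : p ⋖ p₁) (h2 : p ⋖ p₂) :
    Set.Icc p (p₁ ⊔ p₂) = {p, p₁, p₂, p₁ ⊔ p₂} := by
  by_cases hne : p₁ = p₂
  · subst hne
    ext x
    simp only [Set.mem_Icc, Set.mem_insert_iff, Set.mem_singleton_iff, sup_idem]
    constructor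
    · rintro ⟨hpx, hx1⟩
      rcases eq_or_lt_of_le hpx with h | h
      · exact Or.inl h.symm
      · exact Or.inr (Or.inl (cov_eq h1 h hx1))
    · rintro (rfl | rfl | rfl | rfl) <;> simp [h1.1.le]
  · have hmeet : p₁ ⊓ p₂ = p := by
      have hle : p ≤ p₁ ⊓ p₂ := le_inf h1.1.le h2.1.le
      rcases eq_or_lt_of_le hle with h | h
      · exact h.symm
      · exfalso
        have heq : p₁ ⊓ p₂ = p₁ := cov_eq h1 h inf_le_left
        have hle2 : p₁ ≤ p₂ := heq ▸ inf_le_right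
        exact hne (cov_eq h2 h1.1 hle2)
    have hcov1 : (p₁ ⊓ p₂) ⋖ p₁ := hmeet ▸ h1
    have hcov2 : (p₁ ⊓ p₂) ⋖ p₂ := hmeet ▸ h2
    obtain ⟨hc1, hc2⟩ := husm p₁ p₂ hcov1 hcov2
    ext x
    simp only [Set.mem_Icc, Set.mem_insert_iff, Set.mem_singleton_iff]
    constructor
    · rintro ⟨hpx, hxt⟩
      have hx1 : x ⊓ p₁ = p ∨ x ⊓ p₁ = p₁ := by
        have h1le : p ≤ x ⊓ p₁ := le_inf hpx h1.1.le
        rcases eq_or_lt_of_le h1le with h | h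
        · exact Or.inl h.symm
        · exact Or.inr (cov_eq h1 h inf_le_right)
      have hx2 : x ⊓ p₂ = p ∨ x ⊓ p₂ = p₂ := by
        have h2le : p ≤ x ⊓ p₂ := le_inf hpx h2.1.le
        rcases eq_or_lt_of_le h2le with h | h
        · exact Or.inl h.symm
        · exact Or.inr (cov_eq h2 h inf_le_right)
      rcases hx1 with hx1 | hx1
      · rcases hx2 with hx2 | hx2
        · -- x ⊓ p₁ = x ⊓ p₂ = p, so x ⊓ (p₁ ⊔ p₂) = p, but x ≤ p₁ ⊔ p₂
          have := hmsd x p₁ p₂ (hx1.trans hx2.symm)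
          rw [hx1, inf_eq_left.mpr hxt] at this
          exact Or.inl this.symm
        · -- p₂ ≤ x
          have hp2x : p₂ ≤ x := hx2 ▸ inf_le_left
          rcases eq_or_lt_of_le hp2x with h | h
          · exact Or.inr (Or.inr (Or.inl h.symm))
          · exact Or.inr (Or.inr (Or.inr (cov_eq hc2 h hxt)))
      · have hp1x : p₁ ≤ x := hx1 ▸ inf_le_left
        rcases eq_or_lt_of_le hp1x with h | h
        · exact Or.inr (Or.inl h.symm)
        · exact Or.inr (Or.inr (Or.inr (cov_eq hc1 h hxt)))
    · rintro (rfl | rfl | rfl | rfl)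
      · exact ⟨le_refl _, le_sup_left.trans' h1.1.le⟩
      · exact ⟨h1.1.le, le_sup_left⟩
      · exact ⟨h2.1.le, le_sup_right⟩
      · exact ⟨h1.1.le.trans le_sup_left, le_rfl⟩
end

section
/- The Möbius function of any finite join-distributive lattice takes values only in {-1, 0, 1}. In particular, for any interval [x, y] in such a lattice, μ(x, y) ∈ {-1, 0, 1}. -/
/-!
For `x ≤ y` let `t` be the join of `x` with the atoms of `[x, y]`. If `t < y`, Weisner's theorem
for `a = t` writes `μ(x, y)` as a sum of `μ(x, z)` over `z < y` that again are not joins of their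
atoms, so `μ(x, y) = 0` by induction. If `t = y`, meet-semidistributivity makes the atoms
independent and, together with upper semimodularity, makes every `z ∈ [x, y]` the join of its
atoms; Weisner's theorem for a single atom `a` then only sees `z = y` and `z` = the join of the
other atoms, whence `μ(x, y) = -μ(x, z) = (-1) ^ #atoms` by induction.
-/

open Finset IncidenceAlgebra

section Weisner

variable {𝕜 α : Type*} [Ring 𝕜] [Lattice α] [LocallyFiniteOrder α] [DecidableEq α]

theorem sum_mu_filter_sup_eq_zero {x a y : α} (hxa : x < a) :
    ∑ z ∈ Icc x y with z ⊔ a = y, mu 𝕜 x z = 0 := by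
  calc ∑ z ∈ Icc x y with z ⊔ a = y, mu 𝕜 x z
      = ∑ z ∈ Icc x y, mu 𝕜 x z * ∑ w ∈ Icc (z ⊔ a) y, mu 𝕜 w y := by
        rw [sum_filter]
        refine sum_congr rfl fun z _ => ?_
        rw [sum_Icc_mu_left, mul_ite, mul_one, mul_zero]
    _ = ∑ w ∈ Icc a y, (∑ z ∈ Icc x w, mu 𝕜 x z) * mu 𝕜 w y := by
        simp only [mul_sum, sum_mul]
        refine sum_comm' fun z w => ?_
        simp only [mem_Icc, sup_le_iff]
        constructor
        · rintro ⟨⟨hxz, -⟩, ⟨hzw, haw⟩, hwy⟩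
          exact ⟨⟨hxz, hzw⟩, haw, hwy⟩
        · rintro ⟨⟨hxz, hzw⟩, haw, hwy⟩
          exact ⟨⟨hxz, hzw.trans hwy⟩, ⟨hzw, haw⟩, hwy⟩
    _ = 0 := by
        refine sum_eq_zero fun w hw => ?_
        rw [sum_Icc_mu_right, if_neg (hxa.trans_le (mem_Icc.1 hw).1).ne, zero_mul]

end Weisner

section Lattice

variable {α : Type*} [Lattice α]

theorem CovBy.inf_eq_of_not_le {x a z : α} (h : x ⋖ a) (hxz : x ≤ z) (haz : ¬ a ≤ z) :
    a ⊓ z = x :=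
  (h.eq_or_eq (le_inf h.le hxz) inf_le_left).resolve_right fun he => haz (he ▸ inf_le_right)

theorem CovBy.inf_eq_of_ne {x a b : α} (ha : x ⋖ a) (hb : x ⋖ b) (hab : a ≠ b) : a ⊓ b = x :=
  ha.inf_eq_of_not_le hb.le fun h => hab ((hb.eq_or_eq ha.le h).resolve_left ha.lt.ne')

theorem UpperSemimodular.covBy_sup_of_covBy [Finite α] (husm : UpperSemimodular α) {u v p : α}
    (huv : u ⋖ v) (hup : u ≤ p) (hvp : ¬ v ≤ p) : p ⋖ p ⊔ v := by
  induction p using WellFoundedLT.induction with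
  | _ p ih =>
  obtain hup | rfl := hup.lt_or_eq
  swap
  · rwa [sup_eq_right.2 huv.le]
  obtain ⟨q, huq, hqp⟩ := exists_le_covBy_of_lt hup
  have hqv : q ⋖ q ⊔ v := ih q hqp.lt huq fun h => hvp (h.trans hqp.le)
  -- `p ⊓ (q ⊔ v)` lies between `q` and `p`, and cannot be `p` since `q ⊔ v` covers `q`
  have hinf : p ⊓ (q ⊔ v) = q := by
    refine (hqp.eq_or_eq (le_inf hqp.le le_sup_left) inf_le_left).resolve_right fun h => ?_
    have hpqv : p < q ⊔ v :=
      (inf_eq_left.1 h).lt_of_ne fun he => hvp (he ▸ le_sup_right)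
    exact hqv.2 hqp.lt hpqv
  have := (husm p (q ⊔ v) (by rwa [hinf]) (by rwa [hinf])).1
  rwa [← sup_assoc, sup_eq_left.2 hqp.le] at this

theorem MeetSemidistrib.inf_sup_finset_sup_eq [OrderBot α] (hmsd : MeetSemidistrib α)
    {a x : α} {S : Finset α} (h : ∀ s ∈ S, a ⊓ s = a ⊓ x) : a ⊓ (x ⊔ S.sup id) = a ⊓ x := by
  classical
  induction S using Finset.induction_on with
  | empty => simp
  | insert s T _ ih =>
    have hT : a ⊓ (x ⊔ T.sup id) = a ⊓ x := ih fun t ht => h t (mem_insert_of_mem ht)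
    rw [sup_insert, id, sup_left_comm, sup_comm s, ← hT]
    exact (hmsd a _ s (hT.trans (h s (mem_insert_self s T)).symm)).symm

theorem MeetSemidistrib.not_le_sup_finset_sup [OrderBot α] (hmsd : MeetSemidistrib α)
    {x a : α} {S : Finset α} (ha : x ⋖ a) (hS : ∀ s ∈ S, x ⋖ s) (haS : a ∉ S) :
    ¬ a ≤ x ⊔ S.sup id := fun h => ha.lt.ne' <| by
  rw [← inf_eq_left.2 h, hmsd.inf_sup_finset_sup_eq fun s hs => ?_, inf_eq_right.2 ha.le]
  rw [ha.inf_eq_of_ne (hS s hs) (ne_of_mem_of_not_mem hs haS).symm, inf_eq_right.2 ha.le]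

theorem MeetSemidistrib.le_or_eq_of_le_sup (hmsd : MeetSemidistrib α) {x a c z : α}
    (hc : x ⋖ c) (ha : x ⋖ a) (hxz : x ≤ z) (hcza : c ≤ z ⊔ a) : c ≤ z ∨ c = a := by
  by_contra! h
  have hcz : c ⊓ z = x := hc.inf_eq_of_not_le hxz h.1
  have := hmsd c z a (hcz.trans (hc.inf_eq_of_ne ha h.2).symm)
  rw [hcz, inf_eq_left.2 hcza] at this
  exact hc.lt.ne this

section Atoms

variable [LocallyFiniteOrder α]

open Classical in
noncomputable def intervalAtoms (x y : α) : Finset α := {a ∈ Icc x y | x ⋖ a}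

theorem mem_intervalAtoms {x y a : α} : a ∈ intervalAtoms x y ↔ x ⋖ a ∧ a ≤ y := by
  simp only [intervalAtoms, mem_filter, mem_Icc]
  exact ⟨fun ⟨⟨_, hay⟩, hxa⟩ => ⟨hxa, hay⟩, fun ⟨hxa, hay⟩ => ⟨⟨hxa.le, hay⟩, hxa⟩⟩

theorem intervalAtoms_mono {x y y' : α} (h : y ≤ y') : intervalAtoms x y ⊆ intervalAtoms x y' :=
  fun _ ha => mem_intervalAtoms.2 ⟨(mem_intervalAtoms.1 ha).1, (mem_intervalAtoms.1 ha).2.trans h⟩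

theorem intervalAtoms_self (x : α) : intervalAtoms x x = ∅ :=
  eq_empty_of_forall_notMem fun _ ha =>
    (mem_intervalAtoms.1 ha).1.lt.not_ge (mem_intervalAtoms.1 ha).2

theorem MeetSemidistrib.intervalAtoms_sup [DecidableEq α] {x a z : α} (hmsd : MeetSemidistrib α)
    (ha : x ⋖ a) (hxz : x ≤ z) : intervalAtoms x (z ⊔ a) = insert a (intervalAtoms x z) := by
  ext c
  simp only [mem_insert, mem_intervalAtoms]
  constructor
  · rintro ⟨hc, hcza⟩
    exact (hmsd.le_or_eq_of_le_sup hc ha hxz hcza).symm.imp id (⟨hc, ·⟩)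
  · rintro (rfl | ⟨hc, hcz⟩)
    exacts [⟨ha, le_sup_right⟩, ⟨hc, hcz.trans le_sup_left⟩]

theorem MeetSemidistrib.intervalAtoms_eq_erase [DecidableEq α] {x a z : α}
    (hmsd : MeetSemidistrib α) (ha : x ⋖ a) (hxz : x ≤ z) (haz : ¬ a ≤ z) :
    intervalAtoms x z = (intervalAtoms x (z ⊔ a)).erase a := by
  rw [hmsd.intervalAtoms_sup ha hxz, erase_insert fun h => haz (mem_intervalAtoms.1 h).2]

variable [OrderBot α]

noncomputable def atomJoin (x y : α) : α := x ⊔ (intervalAtoms x y).sup id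

theorem atomJoin_self (x : α) : atomJoin x x = x := by
  simp [atomJoin, intervalAtoms_self]

theorem atomJoin_le {x y : α} (hxy : x ≤ y) : atomJoin x y ≤ y :=
  sup_le hxy (Finset.sup_le fun _ ha => (mem_intervalAtoms.1 ha).2)

theorem atomJoin_mono {x y y' : α} (h : y ≤ y') : atomJoin x y ≤ atomJoin x y' :=
  sup_le_sup_left (sup_mono (intervalAtoms_mono h)) x

theorem le_atomJoin {x y a : α} (ha : x ⋖ a) (hay : a ≤ y) : a ≤ atomJoin x y :=
  le_sup_of_le_right (le_sup (f := id) (mem_intervalAtoms.2 ⟨ha, hay⟩))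

theorem atomJoin_eq_self_of_le [Finite α] (hmsd : MeetSemidistrib α) (husm : UpperSemimodular α)
    {x y z : α} (hy : atomJoin x y = y) (hxz : x ≤ z) (hzy : z ≤ y) : atomJoin x z = z := by
  classical
  induction z using WellFoundedGT.induction with
  | _ z ih =>
  obtain hzy | rfl := hzy.lt_or_eq
  swap
  · exact hy
  obtain ⟨a, ha, haz⟩ : ∃ a ∈ intervalAtoms x y, ¬ a ≤ z := by
    by_contra! h
    exact hzy.not_ge (hy ▸ sup_le hxz (Finset.sup_le h))
  obtain ⟨hxa, hay⟩ := mem_intervalAtoms.1 ha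
  have hz : z < z ⊔ a := left_lt_sup.2 haz
  have hza : atomJoin x (z ⊔ a) = z ⊔ a := ih _ hz (hxz.trans hz.le) (sup_le hzy.le hay)
  rw [atomJoin, hmsd.intervalAtoms_sup hxa hxz, sup_insert, id, sup_left_comm,
    ← atomJoin] at hza
  -- `atomJoin x z ≤ z < z ⊔ a = atomJoin x z ⊔ a`, which covers `atomJoin x z`
  have hcov : atomJoin x z ⋖ atomJoin x z ⊔ a :=
    husm.covBy_sup_of_covBy hxa le_sup_left fun h => haz (h.trans (atomJoin_le hxz))
  rw [sup_comm, hza] at hcov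
  exact (atomJoin_le hxz).lt_or_eq.resolve_left fun h => hcov.2 h hz

variable [DecidableEq α] [Finite α] {𝕜 : Type*} [Ring 𝕜]

theorem mu_eq_zero_of_atomJoin_ne {x y : α} (hy : atomJoin x y ≠ y) : mu 𝕜 x y = 0 := by
  induction y using WellFoundedLT.induction with
  | _ y ih =>
  by_cases hxy : x ≤ y
  swap
  · exact apply_eq_zero_of_not_le hxy _
  obtain hxy | rfl := hxy.lt_or_eq
  swap
  · exact absurd (atomJoin_self x) hy
  set t := atomJoin x y
  have hty : t < y := (atomJoin_le hxy.le).lt_of_ne hy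
  obtain ⟨a, hxa, hay⟩ := exists_covBy_le_of_lt hxy
  have hW := sum_mu_filter_sup_eq_zero (𝕜 := 𝕜) (y := y) (hxa.lt.trans_le (le_atomJoin hxa hay))
  have hy_mem : y ∈ {z ∈ Icc x y | z ⊔ t = y} :=
    mem_filter.2 ⟨mem_Icc.2 ⟨hxy.le, le_rfl⟩, sup_eq_left.2 hty.le⟩
  rwa [sum_eq_single_of_mem y hy_mem fun z hz hzy => ?_] at hW
  obtain ⟨hz, hzt⟩ := mem_filter.1 hz
  have hzy : z < y := (mem_Icc.1 hz).2.lt_of_ne hzy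
  -- were `z` the join of its atoms, it would lie below `t`, and `z ⊔ t = t ≠ y`
  refine ih z hzy fun hz => hty.ne ?_
  rwa [sup_eq_right.2 (hz ▸ atomJoin_mono hzy.le)] at hzt

theorem mu_eq_neg_one_pow_of_atomJoin_eq (hmsd : MeetSemidistrib α) (husm : UpperSemimodular α)
    {x y : α} (hxy : x ≤ y) (hy : atomJoin x y = y) :
    mu 𝕜 x y = (-1) ^ #(intervalAtoms x y) := by
  induction y using WellFoundedLT.induction with
  | _ y ih =>
  obtain hxy | rfl := hxy.lt_or_eq
  swap
  · simp [intervalAtoms_self]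
  obtain ⟨a, ha⟩ : (intervalAtoms x y).Nonempty := by
    by_contra! h
    simp [atomJoin, h, hxy.ne] at hy
  obtain ⟨hxa, hay⟩ := mem_intervalAtoms.1 ha
  set S := (intervalAtoms x y).erase a
  set z₀ := x ⊔ S.sup id
  have hz₀a : z₀ ⊔ a = y := by
    rw [sup_assoc, sup_comm _ a, ← id_eq a, ← sup_insert, insert_erase ha, ← atomJoin, hy]
  have haz₀ : ¬ a ≤ z₀ := hmsd.not_le_sup_finset_sup hxa
    (fun s hs => (mem_intervalAtoms.1 (mem_of_mem_erase hs)).1) (notMem_erase a _)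
  have hatoms : ∀ z, x ≤ z → ¬ a ≤ z → z ⊔ a = y → intervalAtoms x z = S := by
    intro z hxz haz hza
    rw [hmsd.intervalAtoms_eq_erase hxa hxz haz, hza]
  have hz₀ : atomJoin x z₀ = z₀ := by rw [atomJoin, hatoms z₀ le_sup_left haz₀ hz₀a]
  have hpair : {z ∈ Icc x y | z ⊔ a = y} = {y, z₀} := by
    ext z
    simp only [mem_filter, mem_Icc, mem_insert, mem_singleton]
    constructor
    · rintro ⟨⟨hxz, hzy⟩, hza⟩
      refine or_iff_not_imp_left.2 fun hne => ?_
      have haz : ¬ a ≤ z := fun h => hne (by rwa [sup_eq_left.2 h] at hza)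
      rw [← atomJoin_eq_self_of_le hmsd husm hy hxz hzy, atomJoin, hatoms z hxz haz hza]
    · rintro (rfl | rfl)
      exacts [⟨⟨hxy.le, le_rfl⟩, sup_eq_left.2 hay⟩, ⟨⟨le_sup_left, hz₀a ▸ le_sup_left⟩, hz₀a⟩]
  have hz₀y : z₀ < y := hz₀a ▸ left_lt_sup.2 haz₀
  have hW := sum_mu_filter_sup_eq_zero (𝕜 := 𝕜) (y := y) hxa.lt
  rw [hpair, sum_pair hz₀y.ne', ih z₀ hz₀y le_sup_left hz₀, hatoms z₀ le_sup_left haz₀ hz₀a] at hW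
  rw [← card_erase_add_one ha, pow_succ, mul_neg_one, eq_neg_of_add_eq_zero_left hW]

end Atoms

end Lattice

/-- The Möbius function of a finite join-distributive lattice takes values only in
`{-1, 0, 1}`. -/
theorem stmt4 {α : Type*} [Lattice α] [Fintype α] [DecidableEq α] [LocallyFiniteOrder α]
    (hmsd : MeetSemidistrib α) (husm : UpperSemimodular α)
    (x y : α) (hxy : x ≤ y) :
    IncidenceAlgebra.mu ℤ x y ∈ ({-1, 0, 1} : Set ℤ) := by
  have : Nonempty α := ⟨x⟩
  let := Fintype.toOrderBot α
  by_cases hy : atomJoin x y = y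
  · rw [mu_eq_neg_one_pow_of_atomJoin_eq hmsd husm hxy hy]
    rcases neg_one_pow_eq_or ℤ #(intervalAtoms x y) with h | h <;> simp [h]
  · simp [mu_eq_zero_of_atomJoin_ne hy]
end

section
/- The lattice of feasible sets of an antimatroid on a finite set, ordered by inclusion, is upper semimodular: if X ∧ Y is covered by both X and Y, then X ∨ Y = X ∪ Y covers both X and Y. -/
open Finset

structure Antimatroid (M : Type*) [DecidableEq M] [Fintype M] where
  F : Finset (Finset M)
  empty_mem : ∅ ∈ F
  union_closed : ∀ X ∈ F, ∀ Y ∈ F, X ∪ Y ∈ F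
  accessible : ∀ X ∈ F, X ≠ ∅ → ∃ x ∈ X, X \ {x} ∈ F

def Antimatroid.Cov {M : Type*} [DecidableEq M] [Fintype M] (A : Antimatroid M)
    (X Y : Finset M) : Prop :=
  X ∈ A.F ∧ Y ∈ A.F ∧ X ⊂ Y ∧ ∀ Z ∈ A.F, ¬(X ⊂ Z ∧ Z ⊂ Y)

theorem Antimatroid.exchange {M : Type*} [DecidableEq M] [Fintype M] (A : Antimatroid M) :
    ∀ B ∈ A.F, ∀ a ∈ A.F, ¬ B ⊆ a → ∃ x ∈ B \ a, a ∪ {x} ∈ A.F := by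
  intro B
  induction B using Finset.strongInduction with
  | _ B ih =>
    intro hB a ha hBa
    have hne : B ≠ ∅ := by rintro rfl; exact hBa (empty_subset a)
    obtain ⟨x, hx, hB'⟩ := A.accessible B hB hne
    by_cases h : B \ {x} ⊆ a
    · have hxa : x ∉ a := by
        intro hxa
        refine hBa fun z hz => ?_
        by_cases hzx : z = x
        · exact hzx ▸ hxa
        · exact h (mem_sdiff.mpr ⟨hz, by simp [hzx]⟩)
      refine ⟨x, mem_sdiff.mpr ⟨hx, hxa⟩, ?_⟩
      have h2 := A.union_closed a ha B hB
      have heq : a ∪ B = a ∪ {x} := by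
        apply Subset.antisymm
        · intro z hz
          rcases mem_union.mp hz with h1 | h1
          · exact mem_union_left _ h1
          · by_cases hzx : z = x
            · simp [hzx]
            · exact mem_union_left _ (h (mem_sdiff.mpr ⟨h1, by simp [hzx]⟩))
        · exact union_subset_union_right (singleton_subset_iff.mpr hx)
      rwa [heq] at h2
    · have hss : B \ {x} ⊂ B := by
        refine Finset.sdiff_ssubset ?_ ?_
        · exact singleton_subset_iff.mpr hx
        · exact singleton_nonempty x
      obtain ⟨y, hy, hfy⟩ := ih (B \ {x}) hss hB' a ha h
      refine ⟨y, ?_, hfy⟩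
      rw [mem_sdiff] at hy ⊢
      exact ⟨(mem_sdiff.mp hy.1).1, hy.2⟩

theorem Antimatroid.cov_single {M : Type*} [DecidableEq M] [Fintype M] (A : Antimatroid M)
    {m X : Finset M} (h : A.Cov m X) : ∃ x ∈ X \ m, X = m ∪ {x} := by
  obtain ⟨hm, hX, hss, hcov⟩ := h
  obtain ⟨x, hx, hf⟩ := A.exchange X hX m hm (fun hc => hss.2 hc)
  refine ⟨x, hx, ?_⟩
  rw [mem_sdiff] at hx
  by_contra hne
  refine hcov (m ∪ {x}) hf ⟨?_, ?_⟩
  · constructor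
    · exact subset_union_left
    · intro hc
      exact hx.2 (hc (by simp))
  · constructor
    · exact union_subset hss.1 (singleton_subset_iff.mpr hx.1)
    · intro hc
      exact hne (Subset.antisymm (hc) (union_subset hss.1 (singleton_subset_iff.mpr hx.1)))

/-- The lattice of feasible sets of an antimatroid is upper semimodular: if the meet of `X`
and `Y` (the largest feasible set contained in `X ∩ Y`) is covered by both `X` and `Y`,
then `X ∪ Y` covers both `X` and `Y`. -/
theorem stmt7 {M : Type*} [DecidableEq M] [Fintype M] (A : Antimatroid M)
    (X Y m : Finset M) (hX : X ∈ A.F) (hY : Y ∈ A.F) (hm : m ∈ A.F)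
    (hmXY : m ⊆ X ∩ Y) (hmax : ∀ Z ∈ A.F, Z ⊆ X ∩ Y → Z ⊆ m)
    (hcovX : A.Cov m X) (hcovY : A.Cov m Y) :
    A.Cov X (X ∪ Y) ∧ A.Cov Y (X ∪ Y) := by
  obtain ⟨x, hx, hXeq⟩ := A.cov_single hcovX
  obtain ⟨y, hy, hYeq⟩ := A.cov_single hcovY
  rw [mem_sdiff] at hx hy
  have hXY : X ≠ Y := by
    intro h
    have : X ⊆ m := hmax X hX (by rw [h]; exact subset_inter (h ▸ Subset.rfl) Subset.rfl)
    exact hx.2 (this hx.1)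
  have hxy : x ≠ y := by
    intro h
    exact hXY (by rw [hXeq, hYeq, h])
  have hU : X ∪ Y ∈ A.F := A.union_closed X hX Y hY
  have hyX : y ∉ X := by
    rw [hXeq]
    simp only [mem_union, mem_singleton]
    rintro (h | h)
    · exact hy.2 h
    · exact hxy h.symm
  have hxY : x ∉ Y := by
    rw [hYeq]
    simp only [mem_union, mem_singleton]
    rintro (h | h)
    · exact hx.2 h
    · exact hxy h
  have hmX : m ⊆ X := hmXY.trans inter_subset_left
  have hmY : m ⊆ Y := hmXY.trans inter_subset_right
  have hXU : X ∪ Y = X ∪ {y} := by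
    rw [hYeq, ← union_assoc, union_eq_left.mpr hmX]
  have hYU : X ∪ Y = Y ∪ {x} := by
    rw [hXeq, union_comm, ← union_assoc, union_eq_left.mpr hmY]
  have key : ∀ (W : Finset M) (w : M), w ∉ W → ∀ Z, ¬(W ⊂ Z ∧ Z ⊂ W ∪ {w}) := by
    rintro W w hw Z ⟨h1, h2⟩
    obtain ⟨z, hz, hzW⟩ := Finset.exists_of_ssubset h1
    have hzw : z = w := by
      have := h2.1 hz
      simp only [mem_union, mem_singleton] at this
      tauto
    exact h2.2 (union_subset h1.1 (singleton_subset_iff.mpr (hzw ▸ hz)))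
  constructor
  · refine ⟨hX, hU, ?_, fun Z _ => ?_⟩
    · rw [hXU]; exact ⟨subset_union_left, fun hc => hyX (hc (by simp))⟩
    · rw [hXU]; exact key X y hyX Z
  · refine ⟨hY, hU, ?_, fun Z _ => ?_⟩
    · rw [hYU]; exact ⟨subset_union_left, fun hc => hxY (hc (by simp))⟩
    · rw [hYU]; exact key Y x hxY Z
end

section
/- The lattice of feasible sets of an antimatroid on a finite set, ordered by inclusion, is meet-semidistributive: for feasible sets P, Q, R, if P ∧ Q = P ∧ R then P ∧ Q = P ∧ (Q ∪ R). -/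
open Finset

/-- The meet of two feasible sets: the union of all feasible sets contained in `X ∩ Y`. -/
def Antimatroid.meet {M : Type*} [DecidableEq M] [Fintype M] (A : Antimatroid M)
    (X Y : Finset M) : Finset M :=
  (A.F.filter fun W => W ⊆ X ∩ Y).sup id

/-- The lattice of feasible sets of an antimatroid is meet-semidistributive:
if `P ∧ Q = P ∧ R` then `P ∧ Q = P ∧ (Q ∪ R)`. -/
theorem stmt8 {M : Type*} [DecidableEq M] [Fintype M] (A : Antimatroid M)
    (P Q R : Finset M) (hP : P ∈ A.F) (hQ : Q ∈ A.F) (hR : R ∈ A.F)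
    (h : A.meet P Q = A.meet P R) :
    A.meet P Q = A.meet P (Q ∪ R) := by
  have hmle : ∀ Y : Finset M, A.meet P Y ⊆ P ∩ Y := by
    intro Y
    rw [← Finset.le_iff_subset]
    exact Finset.sup_le fun W hW => Finset.le_iff_subset.mpr (Finset.mem_filter.mp hW).2
  have hWle : ∀ (Y W : Finset M), W ∈ A.F → W ⊆ P ∩ Y → W ⊆ A.meet P Y := by
    intro Y W hW hsub
    rw [← Finset.le_iff_subset]
    exact Finset.le_sup (f := id) (Finset.mem_filter.mpr ⟨hW, hsub⟩)
  have key : ∀ (n : ℕ) (W : Finset M), W ∈ A.F → W.card ≤ n →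
      W ⊆ P ∩ (Q ∪ R) → W ⊆ A.meet P Q := by
    intro n
    induction n with
    | zero =>
      intro W _ hc _
      have : W = ∅ := Finset.card_eq_zero.mp (Nat.le_antisymm hc (Nat.zero_le _))
      subst this
      exact Finset.empty_subset _
    | succ n ih =>
      intro W hWF hc hWsub
      by_cases hW0 : W = ∅
      · subst hW0; exact Finset.empty_subset _
      · obtain ⟨x, hxW, hW'F⟩ := A.accessible W hWF hW0
        have hc' : (W \ {x}).card ≤ n := by
          have h1 : (W \ {x}).card = W.card - 1 := by
            rw [Finset.card_sdiff_of_subset (by simpa using hxW)]; simp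
          have h2 : 1 ≤ W.card := Finset.card_pos.mpr ⟨x, hxW⟩
          omega
        have hm' : W \ {x} ⊆ A.meet P Q :=
          ih _ hW'F hc' ((Finset.sdiff_subset).trans hWsub)
        have hxQR : x ∈ Q ∪ R := (Finset.mem_inter.mp (hWsub hxW)).2
        have hWP : W ⊆ P := fun y hy => (Finset.mem_inter.mp (hWsub hy)).1
        rcases Finset.mem_union.mp hxQR with hxQ | hxR
        · apply hWle Q W hWF
          intro y hy
          rcases eq_or_ne y x with rfl | hne
          · exact Finset.mem_inter.mpr ⟨hWP hy, hxQ⟩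
          · exact (hmle Q) (hm' (Finset.mem_sdiff.mpr ⟨hy, by simpa⟩))
        · have hWR : W ⊆ A.meet P R := by
            apply hWle R W hWF
            intro y hy
            rcases eq_or_ne y x with rfl | hne
            · exact Finset.mem_inter.mpr ⟨hWP hy, hxR⟩
            · have hy' : y ∈ A.meet P Q := hm' (Finset.mem_sdiff.mpr ⟨hy, by simpa⟩)
              rw [h] at hy'
              exact (hmle R) hy'
          rw [h]
          exact hWR
  apply Finset.Subset.antisymm
  · rw [← Finset.le_iff_subset]
    exact Finset.sup_le fun W hW => Finset.le_iff_subset.mpr <|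
      hWle (Q ∪ R) W (Finset.mem_filter.mp hW).1
        ((Finset.mem_filter.mp hW).2.trans
          (Finset.inter_subset_inter Finset.Subset.rfl Finset.subset_union_left))
  · rw [← Finset.le_iff_subset]
    exact Finset.sup_le fun W hW => Finset.le_iff_subset.mpr <|
      key W.card W (Finset.mem_filter.mp hW).1 le_rfl (Finset.mem_filter.mp hW).2
end

section
/- Let L be a finite lattice admitting an SB-labeling. Then for every pair of elements x ≤ y in L, the Möbius function satisfies μ(x, y) ∈ {-1, 0, 1}. -/
/-!
For an SB-labeling, all saturated chains from `u` to `v` use the same set of labels: two chains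
leaving `u` through different covers `a`, `b` can both be rerouted through `a ⊔ b`, where each
uses exactly the labels `λ(u, a)`, `λ(u, b)`. This label set is additive along `u ≤ v ≤ w` and
subadditive over joins. Hence the join of a set `T` of atoms of `[u, v]` carries only the labels
`λ(u, a)`, `a ∈ T`, while it carries `λ(u, b)` for every atom `b` below it; since atoms have
distinct labels, `T` is the set of all atoms below its join. So in Rota's crosscut formula
`μ(u, v) = ∑_{T ⊆ atoms, ⋁ T = v} (-1)^|T|` at most one term survives.
-/

variable {α : Type*}

/-- A saturated chain from `x` to `y`: a list starting at `x`, ending at `y`, each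
consecutive pair a covering pair. -/
def IsSatChain [PartialOrder α] (c : List α) (x y : α) : Prop :=
  c.head? = some x ∧ c.getLast? = some y ∧ List.Chain' (· ⋖ ·) c

/-- The list of labels used by a chain `c` under the edge-labeling `lam`. -/
def chainLabels {Λ : Type*} (lam : α → α → Λ) (c : List α) : List Λ :=
  (c.zip c.tail).map fun p => lam p.1 p.2

/-- An SB-labeling of a lattice: an edge-labeling `lam` of covering pairs such that for all
`p ⋖ p₁, p₂` with `p₁ ≠ p₂`: the two labels differ, every saturated chain from `p` to
`p₁ ⊔ p₂` uses both labels, and uses no other label. -/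
def IsSBLabeling [Lattice α] {Λ : Type*} (lam : α → α → Λ) : Prop :=
  ∀ p p₁ p₂ : α, p ⋖ p₁ → p ⋖ p₂ → p₁ ≠ p₂ →
    lam p p₁ ≠ lam p p₂ ∧
    ∀ c : List α, IsSatChain c p (p₁ ⊔ p₂) →
      lam p p₁ ∈ chainLabels lam c ∧ lam p p₂ ∈ chainLabels lam c ∧
      ∀ l ∈ chainLabels lam c, l = lam p p₁ ∨ l = lam p p₂

section SBLabeling

open Finset

variable {Λ : Type*}

inductive SatPath [PartialOrder α] (lam : α → α → Λ) : α → α → Set Λ → Prop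
  | refl (x : α) : SatPath lam x x ∅
  | cons {x y z : α} {S : Set Λ} : x ⋖ y → SatPath lam y z S →
      SatPath lam x z (insert (lam x y) S)

namespace SatPath

variable [PartialOrder α] {lam : α → α → Λ} {x y z : α} {S T : Set Λ}

theorem le (h : SatPath lam x z S) : x ≤ z := by
  induction h with
  | refl => exact le_rfl
  | cons hxy _ ih => exact hxy.le.trans ih

theorem append (h₁ : SatPath lam x y S) (h₂ : SatPath lam y z T) :
    SatPath lam x z (S ∪ T) := by
  induction h₁ with
  | refl => simpa using h₂
  | cons hxy _ ih => simpa [Set.insert_union] using cons hxy (ih h₂)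

theorem single (h : x ⋖ y) : SatPath lam x y {lam x y} := by
  simpa using cons h (refl y)

theorem exists_isSatChain (h : SatPath lam x z S) :
    ∃ c, IsSatChain c x z ∧ {l | l ∈ chainLabels lam c} = S := by
  suffices ∃ r, IsSatChain (x :: r) x z ∧ {l | l ∈ chainLabels lam (x :: r)} = S from
    let ⟨r, hr⟩ := this; ⟨x :: r, hr⟩
  induction h with
  | refl x => exact ⟨[], ⟨rfl, rfl, List.isChain_singleton x⟩, by simp [chainLabels]⟩
  | @cons x y z S hxy _ ih =>
    obtain ⟨r, ⟨-, hlast, hchain⟩, hlabels⟩ := ih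
    refine ⟨y :: r, ⟨rfl, by rwa [List.getLast?_cons_cons],
      List.isChain_cons_cons.2 ⟨hxy, hchain⟩⟩, ?_⟩
    rw [← hlabels]
    ext l
    simp [chainLabels]

end SatPath

theorem exists_satPath [PartialOrder α] [LocallyFiniteOrder α] (lam : α → α → Λ) {x z : α}
    (h : x ≤ z) : ∃ S, SatPath lam x z S := by
  rcases h.eq_or_lt with rfl | hlt
  · exact ⟨∅, .refl x⟩
  obtain ⟨y, hxy, hyz⟩ := exists_covBy_le_of_lt hlt
  have : #(Icc y z) < #(Icc x z) := card_lt_card (Icc_ssubset_Icc_left h hxy.lt le_rfl)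
  obtain ⟨S, hS⟩ := exists_satPath lam hyz
  exact ⟨_, .cons hxy hS⟩
termination_by #(Icc x z)

def labels [PartialOrder α] (lam : α → α → Λ) (u v : α) : Set Λ :=
  {l | ∃ S, SatPath lam u v S ∧ l ∈ S}

section JoinFrom

variable [Lattice α] [DecidableEq α]

def joinFrom (u : α) (T : Finset α) : α := (insert u T).sup' (insert_nonempty u T) id

theorem joinFrom_empty (u : α) : joinFrom u ∅ = u := by
  simp [joinFrom]

theorem joinFrom_insert (u a : α) (T : Finset α) :
    joinFrom u (insert a T) = a ⊔ joinFrom u T := by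
  simp only [joinFrom, insert_comm u a]
  exact sup'_insert (insert_nonempty u T) id

theorem joinFrom_le_iff {u v : α} {T : Finset α} :
    joinFrom u T ≤ v ↔ u ≤ v ∧ ∀ a ∈ T, a ≤ v := by
  simp [joinFrom, sup'_le_iff]

theorem le_joinFrom_self (u : α) (T : Finset α) : u ≤ joinFrom u T :=
  (joinFrom_le_iff.1 le_rfl).1

theorem le_joinFrom {u a : α} {T : Finset α} (ha : a ∈ T) : a ≤ joinFrom u T :=
  (joinFrom_le_iff.1 le_rfl).2 a ha

end JoinFrom

namespace IsSBLabeling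

variable [Lattice α] {lam : α → α → Λ} {u v w a b : α} {S : Set Λ}

theorem satPath_sup (hSB : IsSBLabeling lam) (ha : u ⋖ a) (hb : u ⋖ b) (hab : a ≠ b)
    (h : SatPath lam u (a ⊔ b) S) : S = {lam u a, lam u b} := by
  obtain ⟨c, hc, rfl⟩ := h.exists_isSatChain
  obtain ⟨hac, hbc, hcab⟩ := (hSB u a b ha hb hab).2 c hc
  ext l
  exact ⟨hcab l, by rintro (rfl | rfl) <;> assumption⟩

variable [LocallyFiniteOrder α]

theorem satPath_unique (hSB : IsSBLabeling lam) {u v : α} {S T : Set Λ}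
    (h₁ : SatPath lam u v S) (h₂ : SatPath lam u v T) : S = T := by
  rcases h₁ with _ | @⟨_, a, _, Sa, hua, hav⟩ <;>
    rcases h₂ with _ | @⟨_, b, _, Tb, hub, hbv⟩
  · rfl
  · exact absurd hbv.le hub.lt.not_ge
  · exact absurd hav.le hua.lt.not_ge
  have hcard : #(Icc a v) < #(Icc u v) :=
    card_lt_card (Icc_ssubset_Icc_left (hua.le.trans hav.le) hua.lt le_rfl)
  by_cases hab : a = b
  · subst hab
    exact congrArg _ (satPath_unique hSB hav hbv)
  have hcard' : #(Icc b v) < #(Icc u v) :=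
    card_lt_card (Icc_ssubset_Icc_left (hub.le.trans hbv.le) hub.lt le_rfl)
  obtain ⟨P, hP⟩ := exists_satPath lam (sup_le hav.le hbv.le)
  obtain ⟨Qa, hQa⟩ := exists_satPath lam (le_sup_left : a ≤ a ⊔ b)
  obtain ⟨Qb, hQb⟩ := exists_satPath lam (le_sup_right : b ≤ a ⊔ b)
  have hSa : Sa = Qa ∪ P := satPath_unique hSB hav (hQa.append hP)
  have hTb : Tb = Qb ∪ P := satPath_unique hSB hbv (hQb.append hP)
  rw [hSa, hTb, ← Set.insert_union, ← Set.insert_union,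
    hSB.satPath_sup hua hub hab (hQa.cons hua), hSB.satPath_sup hua hub hab (hQb.cons hub)]
termination_by #(Icc u v)

theorem labels_eq (hSB : IsSBLabeling lam) (h : SatPath lam u v S) : labels lam u v = S := by
  ext l
  exact ⟨fun ⟨T, hT, hl⟩ => hSB.satPath_unique hT h ▸ hl, fun hl => ⟨S, h, hl⟩⟩

theorem labels_trans (hSB : IsSBLabeling lam) (huv : u ≤ v) (hvw : v ≤ w) :
    labels lam u w = labels lam u v ∪ labels lam v w := by
  obtain ⟨S, hS⟩ := exists_satPath lam huv
  obtain ⟨T, hT⟩ := exists_satPath lam hvw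
  rw [hSB.labels_eq hS, hSB.labels_eq hT, hSB.labels_eq (hS.append hT)]

theorem labels_of_covBy (hSB : IsSBLabeling lam) (h : u ⋖ v) : labels lam u v = {lam u v} :=
  hSB.labels_eq (.single h)

theorem labels_sup (hSB : IsSBLabeling lam) (ha : u ⋖ a) (hb : u ⋖ b) (hab : a ≠ b) :
    labels lam u (a ⊔ b) = {lam u a, lam u b} := by
  obtain ⟨S, hS⟩ := exists_satPath lam (le_sup_left : a ≤ a ⊔ b)
  rw [hSB.labels_eq (hS.cons ha), hSB.satPath_sup ha hb hab (hS.cons ha)]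

theorem lam_mem_labels (hSB : IsSBLabeling lam) (hb : u ⋖ b) (hbv : b ≤ v) :
    lam u b ∈ labels lam u v := by
  rw [hSB.labels_trans hb.le hbv, hSB.labels_of_covBy hb]
  exact Or.inl rfl

theorem labels_sup_subset (hSB : IsSBLabeling lam) {u z w : α} (hz : u ≤ z) (hw : u ≤ w) :
    labels lam u (z ⊔ w) ⊆ labels lam u z ∪ labels lam u w := by
  rcases hw.eq_or_lt with rfl | huw
  · rw [sup_eq_left.2 hz]
    exact Set.subset_union_left
  obtain ⟨s, hs, hsw⟩ := exists_covBy_le_of_lt huw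
  -- Go through the first step `c` of a chain to `z`: `z ⊔ s = z ⊔ (c ⊔ s)`, and by the
  -- SB property `[c, c ⊔ s]` only carries the labels `λ(u, c)`, `λ(u, s)`.
  have hcover : labels lam u (z ⊔ s) ⊆ labels lam u z ∪ {lam u s} := by
    rcases hz.eq_or_lt with rfl | huz
    · rw [sup_eq_right.2 hs.le, hSB.labels_of_covBy hs]
      exact Set.subset_union_right
    obtain ⟨c, hc, hcz⟩ := exists_covBy_le_of_lt huz
    by_cases hcs : c = s
    · rw [← hcs, sup_eq_left.2 hcz]
      exact Set.subset_union_left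
    have hcard : #(Icc c (z ⊔ (c ⊔ s))) < #(Icc u (z ⊔ w)) := by
      refine card_lt_card (Icc_ssubset_Icc_left (hz.trans le_sup_left) hc.lt ?_)
      exact sup_le le_sup_left (sup_le (hcz.trans le_sup_left) (hsw.trans le_sup_right))
    have hrec := labels_sup_subset hSB hcz (le_sup_left : c ≤ c ⊔ s)
    rw [← sup_assoc, sup_eq_left.2 hcz] at hrec
    have hcs' : labels lam c (c ⊔ s) ⊆ {lam u c, lam u s} := by
      rw [← hSB.labels_sup hc hs hcs, hSB.labels_trans hc.le le_sup_left]
      exact Set.subset_union_right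
    calc labels lam u (z ⊔ s)
        = {lam u c} ∪ labels lam c (z ⊔ s) := by
          rw [hSB.labels_trans hc.le (hcz.trans le_sup_left), hSB.labels_of_covBy hc]
      _ ⊆ {lam u c} ∪ (labels lam c z ∪ {lam u c, lam u s}) :=
          Set.union_subset_union_right _ (hrec.trans (Set.union_subset_union_right _ hcs'))
      _ ⊆ labels lam u z ∪ {lam u s} := by
          rw [hSB.labels_trans hc.le hcz, hSB.labels_of_covBy hc]
          intro l
          simp only [Set.mem_union, Set.mem_insert_iff, Set.mem_singleton_iff]
          tauto
  have hcard : #(Icc s (z ⊔ s ⊔ w)) < #(Icc u (z ⊔ w)) := by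
    refine card_lt_card (Icc_ssubset_Icc_left (hz.trans le_sup_left) hs.lt ?_)
    exact sup_le (sup_le le_sup_left (hsw.trans le_sup_right)) le_sup_right
  have hrec := labels_sup_subset hSB (le_sup_right : s ≤ z ⊔ s) hsw
  rw [sup_assoc, sup_eq_right.2 hsw] at hrec
  calc labels lam u (z ⊔ w)
      = {lam u s} ∪ labels lam s (z ⊔ w) := by
        rw [hSB.labels_trans hs.le (hsw.trans le_sup_right), hSB.labels_of_covBy hs]
    _ ⊆ {lam u s} ∪ (labels lam s (z ⊔ s) ∪ labels lam s w) :=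
        Set.union_subset_union_right _ hrec
    _ = labels lam u (z ⊔ s) ∪ labels lam s w := by
        rw [hSB.labels_trans hs.le le_sup_right, hSB.labels_of_covBy hs, Set.union_assoc]
    _ ⊆ labels lam u z ∪ {lam u s} ∪ labels lam s w := Set.union_subset_union_left _ hcover
    _ = labels lam u z ∪ labels lam u w := by
        rw [hSB.labels_trans hs.le hsw, hSB.labels_of_covBy hs, Set.union_assoc]
termination_by #(Icc u (z ⊔ w))

variable [DecidableEq α]

theorem labels_joinFrom_subset (hSB : IsSBLabeling lam) {u : α} {T : Finset α}
    (hT : ∀ a ∈ T, u ⋖ a) : labels lam u (joinFrom u T) ⊆ (lam u) '' T := by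
  induction T using Finset.induction_on with
  | empty => simp [joinFrom_empty, hSB.labels_eq (.refl u)]
  | insert a T _ ih =>
    rw [joinFrom_insert]
    refine (hSB.labels_sup_subset (hT a (mem_insert_self a T)).le (le_joinFrom_self u T)).trans ?_
    rw [hSB.labels_of_covBy (hT a (mem_insert_self a T)), coe_insert, Set.image_insert_eq]
    exact Set.union_subset_union_right _ (ih fun b hb => hT b (mem_insert_of_mem hb))

theorem mem_of_covBy_le_joinFrom (hSB : IsSBLabeling lam) {u b : α} {T : Finset α}
    (hT : ∀ a ∈ T, u ⋖ a) (hb : u ⋖ b) (hbT : b ≤ joinFrom u T) : b ∈ T := by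
  obtain ⟨a, ha, hab⟩ := hSB.labels_joinFrom_subset hT (hSB.lam_mem_labels hb hbT)
  by_contra hbT
  exact (hSB u b a hb (hT a ha) (ne_of_mem_of_not_mem ha hbT).symm).1 hab.symm

end IsSBLabeling

section Crosscut

variable [Lattice α] [LocallyFiniteOrder α]

open scoped Classical in
noncomputable def atomsIcc (u v : α) : Finset α := {a ∈ Icc u v | u ⋖ a}

theorem mem_atomsIcc {u v a : α} : a ∈ atomsIcc u v ↔ u ⋖ a ∧ a ≤ v := by
  simp only [atomsIcc, mem_filter, mem_Icc]
  exact ⟨fun ⟨⟨_, hav⟩, hua⟩ => ⟨hua, hav⟩,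
    fun ⟨hua, hav⟩ => ⟨⟨hua.le, hav⟩, hua⟩⟩

theorem atomsIcc_eq_empty_iff {u v : α} (huv : u ≤ v) : atomsIcc u v = ∅ ↔ u = v := by
  refine ⟨fun h => ?_, fun h => ?_⟩
  · by_contra hne
    obtain ⟨a, hua, hav⟩ := exists_covBy_le_of_lt (huv.lt_of_ne hne)
    simpa [h] using mem_atomsIcc.2 ⟨hua, hav⟩
  · subst h
    exact eq_empty_of_forall_notMem fun a ha =>
      (mem_atomsIcc.1 ha).1.lt.not_ge (mem_atomsIcc.1 ha).2

variable [DecidableEq α]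

noncomputable def crosscutSum (u v : α) : ℤ :=
  ∑ T ∈ (atomsIcc u v).powerset with joinFrom u T = v, (-1) ^ #T

theorem crosscutSum_eq_sum_fiber {u x v : α} (hxv : x ≤ v) :
    crosscutSum u x = ∑ T ∈ (atomsIcc u v).powerset with joinFrom u T = x, (-1) ^ #T := by
  refine sum_congr (ext fun T => ?_) fun _ _ => rfl
  simp only [mem_filter, mem_powerset, and_congr_left_iff]
  rintro rfl
  refine ⟨fun h a ha => ?_, fun h a ha => ?_⟩
  · exact mem_atomsIcc.2 ⟨(mem_atomsIcc.1 (h ha)).1, (mem_atomsIcc.1 (h ha)).2.trans hxv⟩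
  · exact mem_atomsIcc.2 ⟨(mem_atomsIcc.1 (h ha)).1, le_joinFrom ha⟩

theorem sum_Icc_crosscutSum {u v : α} (huv : u ≤ v) :
    ∑ x ∈ Icc u v, crosscutSum u x = if u = v then 1 else 0 := by
  have hmaps : ∀ T ∈ (atomsIcc u v).powerset, joinFrom u T ∈ Icc u v := fun T hT =>
    mem_Icc.2 ⟨le_joinFrom_self u T, joinFrom_le_iff.2
      ⟨huv, fun a ha => (mem_atomsIcc.1 (mem_powerset.1 hT ha)).2⟩⟩
  rw [sum_congr rfl fun x hx => crosscutSum_eq_sum_fiber (mem_Icc.1 hx).2,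
    sum_fiberwise_of_maps_to hmaps, sum_powerset_neg_one_pow_card]
  exact if_congr (atomsIcc_eq_empty_iff huv) rfl rfl

theorem crosscutSum_of_not_le {u v : α} (h : ¬u ≤ v) : crosscutSum u v = 0 :=
  sum_eq_zero fun T hT => absurd ((mem_filter.1 hT).2 ▸ le_joinFrom_self u T) h

theorem mu_eq_crosscutSum (u v : α) : IncidenceAlgebra.mu ℤ u v = crosscutSum u v := by
  classical
  let F : IncidenceAlgebra ℤ α := ⟨crosscutSum, fun _ _ => crosscutSum_of_not_le⟩
  have hF : F * IncidenceAlgebra.zeta ℤ = 1 := by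
    ext u v huv
    rw [IncidenceAlgebra.mul_apply, IncidenceAlgebra.one_apply, ← sum_Icc_crosscutSum huv]
    refine sum_congr rfl fun x hx => ?_
    simp [F, (mem_Icc.1 hx).2]
  rw [← left_inv_eq_right_inv hF IncidenceAlgebra.zeta_mul_mu]
  rfl

end Crosscut

end SBLabeling

theorem stmt9_general [Lattice α] [DecidableEq α] [LocallyFiniteOrder α]
    {Λ : Type*} (lam : α → α → Λ) (hSB : IsSBLabeling lam)
    (x y : α) :
    IncidenceAlgebra.mu ℤ x y ∈ ({-1, 0, 1} : Set ℤ) := by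
  have hfilter :
      {T ∈ (atomsIcc x y).powerset | joinFrom x T = y} ⊆ {atomsIcc x y} := by
    intro T hT
    obtain ⟨hTsub, hTy⟩ := Finset.mem_filter.1 hT
    rw [Finset.mem_powerset] at hTsub
    have hT : ∀ a ∈ T, x ⋖ a := fun a ha => (mem_atomsIcc.1 (hTsub ha)).1
    refine Finset.mem_singleton.2 (hTsub.antisymm fun b hb => ?_)
    exact hSB.mem_of_covBy_le_joinFrom hT (mem_atomsIcc.1 hb).1 (hTy ▸ (mem_atomsIcc.1 hb).2)
  rw [mu_eq_crosscutSum, crosscutSum]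
  rcases Finset.subset_singleton_iff.1 hfilter with h | h
  · simp [h]
  · rw [h, Finset.sum_singleton]
    rcases neg_one_pow_eq_or ℤ (atomsIcc x y).card with h | h <;> simp [h]

/-- In a finite lattice admitting an SB-labeling, the Möbius function takes values only in
`{-1, 0, 1}`. -/
theorem stmt9 [Lattice α] [Fintype α] [DecidableEq α] [LocallyFiniteOrder α]
    {Λ : Type*} (lam : α → α → Λ) (hSB : IsSBLabeling lam)
    (x y : α) (hxy : x ≤ y) :
    IncidenceAlgebra.mu ℤ x y ∈ ({-1, 0, 1} : Set ℤ) :=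
  stmt9_general lam hSB x y
end

section
/- In a finite join-distributive lattice, for any p covered by distinct p1 and p2, every saturated chain from p to p1 ∨ p2 has length exactly 2 (i.e., passes through exactly one of p1, p2). -/
/-!
A saturated chain from `p` to `p₁ ⊔ p₂` starts with a cover `p ⋖ b`. If `b` were neither `p₁` nor
`p₂`, then `b ⊓ p₁ = p = b ⊓ p₂`, and meet-semidistributivity would give
`b = b ⊓ (p₁ ⊔ p₂) = p`. So `b` is `p₁` or `p₂`; since `p₁ ⊓ p₂ = p`, upper semimodularity makes
both covered by `p₁ ⊔ p₂`, and the chain ends after one more step.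
-/

variable {α : Type*}

namespace IsSatChain

variable [PartialOrder α] {a b x y : α} {c t : List α}

theorem iff_isChain :
    IsSatChain c x y ↔ c.head? = some x ∧ c.getLast? = some y ∧ c.IsChain (· ⋖ ·) :=
  Iff.rfl

theorem cons_cons_iff :
    IsSatChain (a :: b :: t) x y ↔ a = x ∧ x ⋖ b ∧ IsSatChain (b :: t) b y := by
  simp only [iff_isChain, List.head?_cons, Option.some.injEq, List.getLast?_cons_cons,
    List.isChain_cons_cons, true_and]
  constructor <;> rintro ⟨rfl, h₁, h₂, h₃⟩ <;> exact ⟨rfl, h₂, h₁, h₃⟩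

theorem singleton_iff : IsSatChain [a] x y ↔ a = x ∧ a = y := by
  simp [iff_isChain]

theorem le : ∀ {c : List α} {x : α}, IsSatChain c x y → x ≤ y
  | [], _, h => by simp [iff_isChain] at h
  | [_], _, h => by obtain ⟨rfl, rfl⟩ := singleton_iff.1 h; rfl
  | _ :: _ :: _, _, h => by
    obtain ⟨-, hxb, hb⟩ := cons_cons_iff.1 h
    exact hxb.le.trans hb.le

theorem exists_cons_cons (h : IsSatChain c x y) (hxy : x ≠ y) :
    ∃ b t, c = x :: b :: t ∧ x ⋖ b ∧ IsSatChain (b :: t) b y :=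
  match c, h with
  | [], h => by simp [iff_isChain] at h
  | [_], h => by obtain ⟨rfl, rfl⟩ := singleton_iff.1 h; exact absurd rfl hxy
  | _ :: b :: t, h => by
    obtain ⟨rfl, hxb, hb⟩ := cons_cons_iff.1 h
    exact ⟨b, t, rfl, hxb, hb⟩

theorem eq_pair_of_covBy (h : IsSatChain c x y) (hxy : x ⋖ y) : c = [x, y] := by
  obtain ⟨b, t, rfl, hxb, hb⟩ := h.exists_cons_cons hxy.ne
  obtain rfl : b = y := (hxy.eq_or_eq hxb.le hb.le).resolve_left hxb.ne'
  obtain _ | ⟨w, t⟩ := t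
  · rfl
  · obtain ⟨-, hbw, hw⟩ := cons_cons_iff.1 hb
    exact absurd hw.le hbw.lt.not_ge

end IsSatChain

theorem eq_or_eq_of_covBy_of_le_sup [Lattice α]
    (hmsd : ∀ p q r : α, p ⊓ q = p ⊓ r → p ⊓ q = p ⊓ (q ⊔ r))
    {p p₁ p₂ b : α} (h1 : p ⋖ p₁) (h2 : p ⋖ p₂) (hb : p ⋖ b) (hle : b ≤ p₁ ⊔ p₂) :
    b = p₁ ∨ b = p₂ := by
  by_contra! hne
  have e1 : b ⊓ p₁ = p := hb.wcovBy.inf_eq h1.wcovBy hne.1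
  have e2 : b ⊓ p₂ = p := hb.wcovBy.inf_eq h2.wcovBy hne.2
  have hmeet := hmsd b p₁ p₂ (e1.trans e2.symm)
  rw [e1, inf_eq_left.2 hle] at hmeet
  exact hb.ne hmeet

theorem stmt11_general [Lattice α]
    (hmsd : ∀ p q r : α, p ⊓ q = p ⊓ r → p ⊓ q = p ⊓ (q ⊔ r))
    (husm : ∀ p q : α, (p ⊓ q) ⋖ p → (p ⊓ q) ⋖ q → (p ⋖ (p ⊔ q) ∧ q ⋖ (p ⊔ q)))
    (p p₁ p₂ : α) (h1 : p ⋖ p₁) (h2 : p ⋖ p₂) (hne : p₁ ≠ p₂)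
    (c : List α) (hc : IsSatChain c p (p₁ ⊔ p₂)) :
    c.length = 3 ∧ ((p₁ ∈ c ∧ p₂ ∉ c) ∨ (p₂ ∈ c ∧ p₁ ∉ c)) := by
  have hmeet : p₁ ⊓ p₂ = p := h1.wcovBy.inf_eq h2.wcovBy hne
  obtain ⟨hcov₁, hcov₂⟩ := husm p₁ p₂ (hmeet ▸ h1) (hmeet ▸ h2)
  obtain ⟨b, t, rfl, hpb, hb⟩ := hc.exists_cons_cons (h1.lt.trans_le le_sup_left).ne
  rcases eq_or_eq_of_covBy_of_le_sup hmsd h1 h2 hpb hb.le with rfl | rfl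
  · rw [hb.eq_pair_of_covBy hcov₁]
    simp [h2.ne', hne.symm, hcov₂.ne]
  · rw [hb.eq_pair_of_covBy hcov₂]
    simp [h1.ne', hne, hcov₁.ne]

/-- In a finite join-distributive lattice, for `p` covered by distinct `p₁` and `p₂`, every
saturated chain from `p` to `p₁ ⊔ p₂` has length exactly 2 (three elements), passing
through exactly one of `p₁`, `p₂`. -/
theorem stmt11 [Lattice α] [Fintype α]
    (hmsd : ∀ p q r : α, p ⊓ q = p ⊓ r → p ⊓ q = p ⊓ (q ⊔ r))
    (husm : ∀ p q : α, (p ⊓ q) ⋖ p → (p ⊓ q) ⋖ q → (p ⋖ (p ⊔ q) ∧ q ⋖ (p ⊔ q)))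
    (p p₁ p₂ : α) (h1 : p ⋖ p₁) (h2 : p ⋖ p₂) (hne : p₁ ≠ p₂)
    (c : List α) (hc : IsSatChain c p (p₁ ⊔ p₂)) :
    c.length = 3 ∧ ((p₁ ∈ c ∧ p₂ ∉ c) ∨ (p₂ ∈ c ∧ p₁ ∉ c)) :=
  stmt11_general hmsd husm p p₁ p₂ h1 h2 hne c hc
end

section
/- Let W be a Coxeter group with generating set S, and let γ be a Coxeter element with a fixed reduced word s_1 s_2 ⋯ s_n. For γ-sortable elements u, v ∈ W, u ≤_B v in Bruhat order if and only if α_γ(u) ⊆ α_γ(v), where α_γ(w) is the set of positions of the γ-sorting word of w within the infinite word γ^∞. -/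
/-! Sortable elements of a Coxeter group, following Reading.
We fix a rank `n` and a Coxeter system `cs` over the index type `Fin n`; the fixed reduced
word for the Coxeter element `γ` is `s 0 * s 1 * ⋯ * s (n-1)`.  Position `i` (0-based) of
the half-infinite word `γ^∞ = s 0 ⋯ s (n-1) | s 0 ⋯ s (n-1) | ⋯` carries the letter
`i % n`. -/

variable {n : ℕ} [NeZero n] {W : Type*} [Group W] {M : CoxeterMatrix (Fin n)}

/-- The letter at position `i` of `γ^∞`. -/
def gammaLetter (n : ℕ) [NeZero n] (i : ℕ) : Fin n :=
  ⟨i % n, Nat.mod_lt i (Nat.pos_of_ne_zero (NeZero.ne n))⟩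

/-- The subword of `γ^∞` with (finite) set of positions `A`. -/
def subwordOf (n : ℕ) [NeZero n] (A : Finset ℕ) : List (Fin n) :=
  (A.sort (· ≤ ·)).map (gammaLetter n)

/-- `A` is the set of filled positions `α_γ(w)` of the `γ`-sorting word of `w`: the subword
of `γ^∞` at positions `A` is a reduced word for `w`, and it is lexicographically first among
all subwords of `γ^∞` that are reduced words for `w`. -/
def IsSortingPositions (cs : CoxeterSystem M W) (w : W) (A : Finset ℕ) : Prop :=
  cs.IsReduced (subwordOf n A) ∧ cs.wordProd (subwordOf n A) = w ∧
    ∀ A' : Finset ℕ, cs.IsReduced (subwordOf n A') → cs.wordProd (subwordOf n A') = w →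
      ¬ List.Lex (· < ·) (A'.sort (· ≤ ·)) (A.sort (· ≤ ·))

/-- The blocks of the positions `A` are weakly decreasing, i.e. a letter filled in some
block is also filled in the preceding block. -/
def BlocksDecreasing (n : ℕ) (A : Finset ℕ) : Prop :=
  ∀ p : ℕ, p + n ∈ A → p ∈ A

/-- `w` is `γ`-sortable: the blocks of its `γ`-sorting word are weakly decreasing. -/
def Sortable (cs : CoxeterSystem M W) (w : W) : Prop :=
  ∃ A : Finset ℕ, IsSortingPositions cs w A ∧ BlocksDecreasing n A

/-- Bruhat order: `u ≤_B v` iff some reduced word for `v` has a subword whose product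
is `u`. -/
def Bruhat (cs : CoxeterSystem M W) (u v : W) : Prop :=
  ∃ l : List (Fin n), cs.IsReduced l ∧ cs.wordProd l = v ∧
    ∃ l' : List (Fin n), l'.Sublist l ∧ cs.wordProd l' = u

/-! The `γ`-sorting word of `w` is greedy: its first position `p` is the first position of `γ^∞`
whose letter `s` is a left descent of `w`, and it continues with the sorting word of `s w` from
position `p + 1` on. Let `u ≤ v`. A left descent of `u` is a letter of every reduced word of `v`
(subword property), so if it occurred in `γ^∞` before `p`, the decreasing blocks of `v` would put
it into the sorting word of `v` before `p`. Hence either `s` is a left descent of both `u` and `v`,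
and `s u ≤ s v`, or of `v` only, and `u ≤ s v`; induction then gives `α(u) ⊆ α(v)`. Conversely
`α(u) ⊆ α(v)` makes the sorting word of `u` a subword of that of `v`.

The Coxeter-theoretic input is classical: the strong exchange condition comes from Tits'
permutation representation on `W × ZMod 2`, the simple reflections are pairwise distinct by the
geometric representation, and the subword property of the Bruhat order from Humphreys' lifting
property of Bruhat steps. -/

theorem Module.End.sum_pow_apply_eq_zero {R V : Type*} [CommRing R] [AddCommGroup V]
    [Module R V] {f : Module.End R V} {μ : R} {v : V} (hv : f v = μ • v) {m : ℕ}
    (hμ : ∑ a ∈ Finset.range m, μ ^ a = 0) : (∑ a ∈ Finset.range m, f ^ a) v = 0 := by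
  have hpow : ∀ a : ℕ, (f ^ a) v = μ ^ a • v := by
    intro a
    induction a with
    | zero => simp
    | succ a ih => rw [pow_succ', Module.End.mul_apply, ih, map_smul, hv, smul_smul, ← pow_succ]
  simp [LinearMap.sum_apply, hpow, ← Finset.sum_smul, hμ]

namespace CoxeterMatrix

variable {B : Type*} (M : CoxeterMatrix B)

open Complex Finsupp

/-- For `M k l = 0`, which encodes `m = ∞`, the junk value `π i / 0 = 0` gives `1`, as it
should. -/
noncomputable def braidRoot (k l : B) : ℂ :=
  exp (Real.pi * I / M k l)

/-- `⟪α_k, α_l⟫ = -(ζ + ζ⁻¹) = -2 cos (π / M k l)` with `ζ = braidRoot M k l`. -/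
noncomputable def cosineForm (k : B) : (B →₀ ℂ) →ₗ[ℂ] ℂ :=
  linearCombination ℂ fun l => -(M.braidRoot k l + (M.braidRoot k l)⁻¹)

noncomputable def geomReflection (k : B) : Module.End ℂ (B →₀ ℂ) :=
  LinearMap.id - (M.cosineForm k).smulRight (single k 1)

theorem braidRoot_ne_zero (k l : B) : M.braidRoot k l ≠ 0 :=
  exp_ne_zero _

theorem braidRoot_symm (k l : B) : M.braidRoot k l = M.braidRoot l k := by
  rw [braidRoot, braidRoot, M.symmetric]

theorem braidRoot_self (k : B) : M.braidRoot k k = -1 := by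
  simp [braidRoot]

theorem isPrimitiveRoot_braidRoot_sq {k l : B} (hM : M k l ≠ 0) :
    IsPrimitiveRoot (M.braidRoot k l ^ 2) (M k l) := by
  convert Complex.isPrimitiveRoot_exp (M k l) hM using 1
  rw [braidRoot, ← exp_nat_mul]
  ring_nf

theorem cosineForm_single (k l : B) :
    M.cosineForm k (single l 1) = -(M.braidRoot k l + (M.braidRoot k l)⁻¹) := by
  simp [cosineForm]

theorem cosineForm_single_self (k : B) : M.cosineForm k (single k 1) = 2 := by
  rw [cosineForm_single, braidRoot_self]
  norm_num

theorem geomReflection_apply (k : B) (v : B →₀ ℂ) :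
    M.geomReflection k v = v - M.cosineForm k v • single k 1 :=
  rfl

theorem geomReflection_mul_self (k : B) : M.geomReflection k * M.geomReflection k = 1 := by
  refine LinearMap.ext fun v => ?_
  simp only [Module.End.mul_apply, geomReflection_apply, map_sub, map_smul,
    cosineForm_single_self, Module.End.one_apply]
  module

theorem geomReflection_mul_apply_eigenvector {k l : B} {z : ℂ} (hz : z ≠ 0)
    (hkl : M.cosineForm k (single l 1) = -(z + z⁻¹))
    (hlk : M.cosineForm l (single k 1) = -(z + z⁻¹)) :
    (M.geomReflection k * M.geomReflection l) (z • single k 1 + single l 1) =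
      z ^ 2 • (z • single k 1 + single l 1) := by
  simp only [Module.End.mul_apply, geomReflection_apply, map_add, map_sub, map_smul,
    cosineForm_single_self, hkl, hlk]
  match_scalars <;> field_simp <;> ring

/-- `α_k` and `α_l` are combinations of the eigenvectors `ζ^{±1} α_k + α_l` of `s_k s_l`, whose
eigenvalues `ζ^{±2}` are primitive `M k l`-th roots of unity. -/
theorem geomSum_geomReflection_mul_apply_single {k l : B} (hkl : k ≠ l) (hM : M k l ≠ 0) :
    let S := ∑ a ∈ Finset.range (M k l), (M.geomReflection k * M.geomReflection l) ^ a
    S (single k 1) = 0 ∧ S (single l 1) = 0 := by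
  intro S
  have hm : 1 < M k l := by have := M.off_diagonal k l hkl; omega
  have hprim := M.isPrimitiveRoot_braidRoot_sq hM
  set ζ := M.braidRoot k l
  have hζ : ζ ≠ 0 := M.braidRoot_ne_zero k l
  have hkl' : M.cosineForm k (single l 1) = -(ζ + ζ⁻¹) := M.cosineForm_single k l
  have hlk' : M.cosineForm l (single k 1) = -(ζ + ζ⁻¹) := by
    rw [cosineForm_single, M.braidRoot_symm]
  have hplus : S (ζ • single k 1 + single l 1) = 0 :=
    Module.End.sum_pow_apply_eq_zero (M.geomReflection_mul_apply_eigenvector hζ hkl' hlk')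
      (hprim.geom_sum_eq_zero hm)
  have hminus : S (ζ⁻¹ • single k 1 + single l 1) = 0 := by
    refine Module.End.sum_pow_apply_eq_zero
      (M.geomReflection_mul_apply_eigenvector (inv_ne_zero hζ) ?_ ?_) ?_
    · rwa [inv_inv, add_comm]
    · rwa [inv_inv, add_comm]
    · rw [inv_pow]
      exact hprim.inv.geom_sum_eq_zero hm
  have hne : ζ ^ 2 - 1 ≠ 0 := sub_ne_zero.mpr (hprim.ne_one hm)
  have hk : S (single k 1) = 0 := by
    have : single k 1 = (ζ - ζ⁻¹)⁻¹ • ((ζ • single k 1 + single l 1) -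
        (ζ⁻¹ • single k 1 + single l 1) : B →₀ ℂ) := by
      match_scalars
      · field_simp
      · field_simp
        ring
    rw [this, map_smul, map_sub, hplus, hminus, sub_zero, smul_zero]
  refine ⟨hk, ?_⟩
  have : single l 1 = (ζ • single k 1 + single l 1) - ζ • (single k 1 : B →₀ ℂ) := by abel
  rw [this, map_sub, map_smul, hplus, hk, smul_zero, sub_zero]

/-- `g ^ m - 1 = (∑ a < m, g ^ a) * (g - 1)`, and `g - 1` takes values in the span of `α_k` and
`α_l`. -/
theorem pow_geomReflection_mul {k l : B} (hkl : k ≠ l) (hM : M k l ≠ 0) :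
    (M.geomReflection k * M.geomReflection l) ^ M k l = 1 := by
  obtain ⟨hk, hl⟩ := M.geomSum_geomReflection_mul_apply_single hkl hM
  set g := M.geomReflection k * M.geomReflection l
  rw [← sub_eq_zero, ← geom_sum_mul g (M k l)]
  refine LinearMap.ext fun v => ?_
  have hstep : (g - 1) v = -(M.cosineForm l v • single l 1) -
      M.cosineForm k (M.geomReflection l v) • single k 1 := by
    simp only [LinearMap.sub_apply, Module.End.one_apply, g, Module.End.mul_apply,
      geomReflection_apply]
    abel
  rw [Module.End.mul_apply, hstep, map_sub, map_neg, map_smul, map_smul, hk, hl, smul_zero,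
    smul_zero, neg_zero, sub_zero, LinearMap.zero_apply]

theorem isLiftable_geomReflection : M.IsLiftable M.geomReflection := by
  intro k l
  rcases eq_or_ne k l with rfl | hkl
  · rw [M.diagonal, pow_one, geomReflection_mul_self]
  rcases eq_or_ne (M k l) 0 with h0 | h0
  · rw [h0, pow_zero]
  · exact M.pow_geomReflection_mul hkl h0

end CoxeterMatrix

namespace CoxeterSystem

variable {B : Type*} {W : Type*} [Group W] {M : CoxeterMatrix B} (cs : CoxeterSystem M W)

local prefix:100 "s" => cs.simple
local prefix:100 "π" => cs.wordProd
local prefix:100 "ℓ" => cs.length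
local prefix:100 "ris" => cs.rightInvSeq
local prefix:100 "lis" => cs.leftInvSeq

theorem prod_map_alternatingWord_two_mul {G : Type*} [Monoid G] (f : B → G) (i j : B) (p : ℕ) :
    ((alternatingWord i j (2 * p)).map f).prod = (f i * f j) ^ p := by
  induction p with
  | zero => simp [alternatingWord]
  | succ p ih =>
    rw [show 2 * (p + 1) = 2 * p + 1 + 1 by ring, alternatingWord_succ, alternatingWord_succ]
    simp [ih, pow_succ]

theorem reverse_alternatingWord_two_mul (i j : B) (p : ℕ) :
    (alternatingWord i j (2 * p)).reverse = alternatingWord j i (2 * p) := by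
  induction p generalizing i j with
  | zero => rfl
  | succ p ih =>
    have hodd : ¬ Even (2 * p + 1) := Nat.not_even_two_mul_add_one p
    rw [show 2 * (p + 1) = 2 * p + 1 + 1 by ring, alternatingWord_succ, alternatingWord_succ,
      alternatingWord_succ', alternatingWord_succ']
    simp [ih, hodd]

theorem wordProd_alternatingWord_two_mul_add_one (i j : B) (k : ℕ) :
    π (alternatingWord i j (2 * k + 1)) = s j * (s i * s j) ^ k := by
  rw [prod_alternatingWord_eq_mul_pow, if_neg (Nat.not_even_two_mul_add_one k)]
  congr 2
  omega

/-- Up to reversal, the inversion sequence of the braid word has `k`-th entry `s j (s i s j)^k`,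
periodic of period `M i j`, so it is a list repeated twice. -/
theorem even_count_rightInvSeq_alternatingWord [DecidableEq W] (i j : B) (x : W) :
    Even ((ris (alternatingWord i j (2 * M i j))).count x) := by
  set f : ℕ → W := fun k => π (alternatingWord i j (2 * k + 1))
  have hlis : lis (alternatingWord j i (2 * M i j)) = (List.range (2 * M i j)).map f := by
    refine List.ext_getElem (by simp) fun k hk _ => ?_
    simp only [List.getElem_map, List.getElem_range]
    exact cs.getElem_leftInvSeq_alternatingWord j i (M i j) k (by simpa using hk)
  have hperiod : ∀ k, f (M i j + k) = f k := by
    intro k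
    simp only [f, wordProd_alternatingWord_two_mul_add_one, pow_add, simple_mul_simple_pow,
      one_mul]
  rw [← reverse_alternatingWord_two_mul j i, rightInvSeq_reverse, List.count_reverse, hlis,
    two_mul, List.range_add, List.map_append, List.map_map]
  simp only [Function.comp_def, hperiod, List.count_append]
  exact ⟨_, rfl⟩

section Tits

open scoped Classical

noncomputable def titsPerm (i : B) : Equiv.Perm (W × ZMod 2) :=
  Function.Involutive.toPerm (fun p => (s i * p.1 * s i, p.2 + if p.1 = s i then 1 else 0)) <| by
    intro p
    have hconj : s i * p.1 * s i = s i ↔ p.1 = s i := by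
      constructor <;> intro h
      · simpa [mul_assoc] using congrArg (fun x => s i * x * s i) h
      · simp [h]
    ext
    · simp [mul_assoc]
    · by_cases h : p.1 = s i <;> simp [hconj, h, add_assoc, CharTwo.add_self_eq_zero]

theorem titsPerm_apply (i : B) (p : W × ZMod 2) :
    cs.titsPerm i p = (s i * p.1 * s i, p.2 + if p.1 = s i then 1 else 0) :=
  rfl

theorem prod_map_titsPerm (ω : List B) (p : W × ZMod 2) :
    (ω.map cs.titsPerm).prod p = (π ω * p.1 * (π ω)⁻¹, p.2 + ((ris ω).count p.1 : ZMod 2)) := by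
  induction ω with
  | nil => simp
  | cons i ω ih =>
    have hconj : π ω * p.1 * (π ω)⁻¹ = s i ↔ (π ω)⁻¹ * s i * π ω = p.1 := by
      constructor <;> intro h <;> rw [← h] <;> group
    rw [List.map_cons, List.prod_cons, Equiv.Perm.mul_apply, ih, titsPerm_apply]
    ext
    · simp [wordProd_cons, mul_assoc]
    · simp only [rightInvSeq, List.count_cons, hconj, beq_iff_eq]
      push_cast
      ring

theorem isLiftable_titsPerm : M.IsLiftable cs.titsPerm := by
  intro i j
  rw [← prod_map_alternatingWord_two_mul]
  ext p : 1
  have hprod : π (alternatingWord i j (2 * M i j)) = 1 := by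
    simp [prod_alternatingWord_eq_mul_pow]
  have hcount : ((ris (alternatingWord i j (2 * M i j))).count p.1 : ZMod 2) = 0 :=
    (ZMod.natCast_eq_zero_iff_even).mpr (cs.even_count_rightInvSeq_alternatingWord i j p.1)
  rw [prod_map_titsPerm, hprod, hcount]
  simp

noncomputable def titsRep : W →* Equiv.Perm (W × ZMod 2) :=
  cs.lift ⟨cs.titsPerm, cs.isLiftable_titsPerm⟩

theorem titsRep_wordProd (ω : List B) (p : W × ZMod 2) :
    cs.titsRep (π ω) p = (π ω * p.1 * (π ω)⁻¹, p.2 + ((ris ω).count p.1 : ZMod 2)) := by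
  rw [← prod_map_titsPerm, titsRep, wordProd, map_list_prod, List.map_map]
  congr 3
  ext i : 1
  exact cs.lift_apply_simple cs.isLiftable_titsPerm i

/-- By `titsCocycle_wordProd`, the parity of the number of occurrences of `x` in the right
inversion sequence of a word for `w`; in particular that parity depends on `w` only. -/
noncomputable def titsCocycle (w x : W) : ZMod 2 :=
  (cs.titsRep w (x, 0)).2

theorem titsCocycle_wordProd (ω : List B) (x : W) :
    cs.titsCocycle (π ω) x = (ris ω).count x := by
  simp [titsCocycle, titsRep_wordProd]

theorem titsRep_apply (w : W) (p : W × ZMod 2) :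
    cs.titsRep w p = (w * p.1 * w⁻¹, p.2 + cs.titsCocycle w p.1) := by
  obtain ⟨ω, -, rfl⟩ := cs.exists_isReduced w
  simp [titsCocycle, titsRep_wordProd]

theorem titsCocycle_one (x : W) : cs.titsCocycle 1 x = 0 := by
  simp [titsCocycle]

theorem titsCocycle_mul (a b x : W) :
    cs.titsCocycle (a * b) x = cs.titsCocycle b x + cs.titsCocycle a (b * x * b⁻¹) := by
  have h := congrArg Prod.snd (congrFun (congrArg DFunLike.coe (map_mul cs.titsRep a b)) (x, 0))
  simp only [Equiv.Perm.mul_apply, titsRep_apply, zero_add] at h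
  exact h

theorem titsCocycle_simple_self (i : B) : cs.titsCocycle (s i) (s i) = 1 := by
  simpa [rightInvSeq] using cs.titsCocycle_wordProd [i] (s i)

variable {cs} in
theorem IsReflection.titsCocycle_self {t : W} (ht : cs.IsReflection t) :
    cs.titsCocycle t t = 1 := by
  obtain ⟨u, i, rfl⟩ := ht
  have hu : cs.titsCocycle u⁻¹ (u * s i * u⁻¹) + cs.titsCocycle u (s i) = 0 := by
    simpa [titsCocycle_one, mul_assoc] using (cs.titsCocycle_mul u u⁻¹ (u * s i * u⁻¹)).symm
  have hconj : u⁻¹ * (u * s i * u⁻¹) * u⁻¹⁻¹ = s i := by group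
  rw [titsCocycle_mul, titsCocycle_mul, hconj, titsCocycle_simple_self, inv_simple,
    simple_mul_simple_cancel_right]
  linear_combination hu

theorem mem_rightInvSeq_of_isRightInversion {ω : List B} {t : W}
    (ht : cs.IsRightInversion (π ω) t) : t ∈ ris ω := by
  obtain ⟨ω', hω', hprod⟩ := cs.exists_isReduced (π ω * t)
  have hnot : t ∉ ris ω' := fun hmem => by
    have := (cs.isRightInversion_of_mem_rightInvSeq hω' hmem).2
    rw [← hprod, mul_assoc, ht.1.mul_self, mul_one] at this
    exact lt_asymm ht.2 this
  have hcount : ((ris ω).count t : ZMod 2) = 1 := by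
    rw [← titsCocycle_wordProd, ← mul_inv_cancel_right (π ω) t, ht.1.inv, titsCocycle_mul,
      ht.1.titsCocycle_self, mul_inv_cancel_right, hprod, titsCocycle_wordProd,
      List.count_eq_zero.mpr hnot]
    simp
  by_contra hmem
  simp [List.count_eq_zero.mpr hmem] at hcount

end Tits

theorem exists_eraseIdx_of_isRightInversion {ω : List B} {t : W}
    (ht : cs.IsRightInversion (π ω) t) : ∃ j < ω.length, π (ω.eraseIdx j) = π ω * t := by
  obtain ⟨j, hj, rfl⟩ := List.getElem_of_mem (cs.mem_rightInvSeq_of_isRightInversion ht)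
  refine ⟨j, by simpa using hj, ?_⟩
  rw [← wordProd_mul_getD_rightInvSeq, List.getD_eq_getElem]

theorem mem_leftInvSeq_of_isLeftInversion {ω : List B} {t : W}
    (ht : cs.IsLeftInversion (π ω) t) : t ∈ lis ω := by
  have : cs.IsRightInversion (π ω.reverse) t := by
    rwa [wordProd_reverse, isRightInversion_inv_iff]
  simpa [rightInvSeq_reverse] using cs.mem_rightInvSeq_of_isRightInversion this

theorem exists_eraseIdx_of_isLeftDescent {ω : List B} {i : B} (hi : cs.IsLeftDescent (π ω) i) :
    ∃ j < ω.length, π (ω.eraseIdx j) = s i * π ω := by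
  obtain ⟨j, hj, hget⟩ := List.getElem_of_mem
    (cs.mem_leftInvSeq_of_isLeftInversion ⟨cs.isReflection_simple i, hi⟩)
  refine ⟨j, by simpa using hj, ?_⟩
  rw [← getD_leftInvSeq_mul_wordProd, List.getD_eq_getElem _ _ hj, hget]

theorem isReduced_cons_iff {ω : List B} (hω : cs.IsReduced ω) (i : B) :
    cs.IsReduced (i :: ω) ↔ ¬ cs.IsLeftDescent (π ω) i := by
  rw [IsReduced, wordProd_cons, List.length_cons, ← hω.eq, IsLeftDescent]
  rcases cs.length_simple_mul (π ω) i with h | h <;> omega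

theorem exists_isReduced_sublist (ω : List B) :
    ∃ ρ, ρ.Sublist ω ∧ cs.IsReduced ρ ∧ π ρ = π ω := by
  induction ω with
  | nil => exact ⟨[], .slnil, by simp [IsReduced], rfl⟩
  | cons i ω ih =>
    obtain ⟨ρ, hsub, hρ, hprod⟩ := ih
    by_cases hi : cs.IsLeftDescent (π ρ) i
    · obtain ⟨j, hj, hprod'⟩ := cs.exists_eraseIdx_of_isLeftDescent hi
      refine ⟨ρ.eraseIdx j, ((List.eraseIdx_sublist ρ j).trans hsub).cons i, ?_, ?_⟩
      · have := cs.isLeftDescent_iff.mp hi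
        rw [IsReduced, hprod', List.length_eraseIdx_of_lt hj, ← hρ.eq]
        omega
      · rw [hprod', hprod, wordProd_cons]
    · refine ⟨i :: ρ, hsub.cons_cons i, (cs.isReduced_cons_iff hρ i).mpr hi, ?_⟩
      rw [wordProd_cons, wordProd_cons, hprod]

/-- In the geometric representation `s_i α_i` has `α_i`-coordinate `-1`, and `s_j α_i` has `1`. -/
theorem simple_injective : Function.Injective cs.simple := by
  intro i j hij
  by_contra hne
  have h := congrArg (fun w => cs.lift ⟨_, M.isLiftable_geomReflection⟩ w (Finsupp.single i 1) i)
    hij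
  simp only [cs.lift_apply_simple, M.geomReflection_apply, M.cosineForm_single_self] at h
  simp [hne] at h

theorem mem_of_wordProd_eq_simple {ω : List B} {i : B} (h : π ω = s i) : i ∈ ω := by
  obtain ⟨ρ, hsub, hρ, hprod⟩ := cs.exists_isReduced_sublist ω
  have hlen : ρ.length = 1 := by rw [← hρ.eq, hprod, h, length_simple]
  obtain ⟨j, rfl⟩ := List.length_eq_one_iff.mp hlen
  have : j = i := cs.simple_injective (by rw [← wordProd_singleton, hprod, h])
  exact hsub.subset (by simp [this])

theorem mem_of_isLeftDescent {ω : List B} {i : B} (hi : cs.IsLeftDescent (π ω) i) : i ∈ ω := by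
  obtain ⟨j, -, hj⟩ := cs.exists_eraseIdx_of_isLeftDescent hi
  have h : π (ω.eraseIdx j ++ ω.reverse) = s i := by
    rw [wordProd_append, wordProd_reverse, hj, mul_inv_cancel_right]
  rcases List.mem_append.mp (cs.mem_of_wordProd_eq_simple h) with h | h
  · exact (List.eraseIdx_sublist ω j).subset h
  · exact List.mem_reverse.mp h

def BruhatStep (u w : W) : Prop :=
  ∃ t, cs.IsReflection t ∧ w = u * t ∧ ℓ u < ℓ w

def BruhatLE : W → W → Prop :=
  Relation.ReflTransGen cs.BruhatStep

theorem bruhatStep_eraseIdx {ω : List B} (hω : cs.IsReduced ω) {j : ℕ} (hj : j < ω.length) :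
    cs.BruhatStep (π (ω.eraseIdx j)) (π ω) := by
  have ht : cs.IsReflection ((ris ω).getD j 1) :=
    cs.isReflection_of_mem_rightInvSeq ω <| by
      rw [List.getD_eq_getElem _ _ (by simpa using hj)]
      exact List.getElem_mem _
  refine ⟨_, ht, ?_, ?_⟩
  · rw [← wordProd_mul_getD_rightInvSeq, mul_assoc, ht.mul_self, mul_one]
  · have := cs.length_wordProd_le (ω.eraseIdx j)
    rw [List.length_eraseIdx_of_lt hj] at this
    rw [hω.eq]
    omega

variable {cs}

theorem isReduced_cons_of_isLeftDescent {v : W} {i : B} (hv : cs.IsLeftDescent v i) {ω : List B}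
    (hω : cs.IsReduced ω) (hprod : π ω = s i * v) : cs.IsReduced (i :: ω) ∧ π (i :: ω) = v := by
  refine ⟨?_, by rw [wordProd_cons, hprod, simple_mul_simple_cancel_left]⟩
  rwa [cs.isReduced_cons_iff hω, hprod, ← isLeftDescent_iff_not_isLeftDescent_mul]

/-- The lifting property (Humphreys, *Reflection groups and Coxeter groups*, 5.9). -/
theorem BruhatStep.lift {u w : W} (h : cs.BruhatStep u w) (i : B) :
    cs.BruhatLE (s i * u) w ∨ cs.BruhatLE (s i * u) (s i * w) := by
  obtain ⟨t, ht, rfl, hlt⟩ := h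
  by_cases hi : cs.IsLeftDescent (u * t) i
  · obtain ⟨ρ, hρ, hprod⟩ := cs.exists_isReduced (s i * (u * t))
    obtain ⟨-, hword⟩ := isReduced_cons_of_isLeftDescent hi hρ hprod.symm
    obtain ⟨j, hj, hj'⟩ := cs.exists_eraseIdx_of_isRightInversion (ω := i :: ρ) (t := t)
      ⟨ht, by rwa [hword, mul_assoc, ht.mul_self, mul_one]⟩
    rw [hword, mul_assoc, ht.mul_self, mul_one] at hj'
    cases j with
    | zero =>
      have hu : s i * (u * t) = u := by simpa [hprod] using hj'
      left
      nth_rw 1 [← hu]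
      rw [simple_mul_simple_cancel_left]
      exact .refl
    | succ j =>
      right
      rw [hprod, ← hj', List.eraseIdx_cons_succ, wordProd_cons, simple_mul_simple_cancel_left]
      exact .single (cs.bruhatStep_eraseIdx hρ (by simpa using hj))
  · right
    refine .single ⟨t, ht, by rw [mul_assoc], ?_⟩
    have := cs.length_simple_mul u i
    rw [IsLeftDescent, not_lt] at hi
    rcases cs.length_simple_mul (u * t) i with h | h <;> omega

theorem BruhatLE.lift {u w : W} (h : cs.BruhatLE u w) (i : B) :
    cs.BruhatLE (s i * u) w ∨ cs.BruhatLE (s i * u) (s i * w) := by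
  induction h with
  | refl => exact .inr .refl
  | tail _ hstep ih =>
    rcases ih with ih | ih
    · exact .inl (ih.tail hstep)
    · exact (hstep.lift i).imp ih.trans ih.trans

theorem bruhatLE_of_sublist {ω m : List B} (hω : cs.IsReduced ω) (hm : m.Sublist ω) :
    cs.BruhatLE (π m) (π ω) := by
  induction ω generalizing m with
  | nil =>
    rw [List.sublist_nil.mp hm]
    exact .refl
  | cons i ω ih =>
    have hω' : cs.IsReduced ω := by simpa using hω.drop 1
    have hstep : cs.BruhatStep (π ω) (π (i :: ω)) := cs.bruhatStep_eraseIdx hω (j := 0) (by simp)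
    rcases List.sublist_cons_iff.mp hm with hm | ⟨m', rfl, hm'⟩
    · exact (ih hω' hm).tail hstep
    · rw [wordProd_cons]
      rcases (ih hω' hm').lift i with h | h
      · exact h.tail hstep
      · rwa [wordProd_cons]

theorem BruhatLE.exists_sublist {u v : W} (h : cs.BruhatLE u v) {ω : List B}
    (hω : cs.IsReduced ω) (hv : π ω = v) : ∃ m, m.Sublist ω ∧ π m = u := by
  induction h generalizing ω with
  | refl => exact ⟨ω, .refl ω, hv⟩
  | tail _ hstep ih =>
    obtain ⟨t, ht, rfl, hlt⟩ := hstep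
    obtain ⟨j, -, hj⟩ := cs.exists_eraseIdx_of_isRightInversion (ω := ω) (t := t)
      ⟨ht, by rwa [hv, mul_assoc, ht.mul_self, mul_one]⟩
    obtain ⟨ρ, hsub, hρ, hprod⟩ := cs.exists_isReduced_sublist (ω.eraseIdx j)
    obtain ⟨m, hm, hmprod⟩ := ih hρ (by rw [hprod, hj, hv, mul_assoc, ht.mul_self, mul_one])
    exact ⟨m, hm.trans (hsub.trans (List.eraseIdx_sublist ω j)), hmprod⟩

theorem BruhatLE.eq_one {u : W} (h : cs.BruhatLE u 1) : u = 1 := by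
  obtain ⟨m, hm, rfl⟩ := h.exists_sublist (ω := []) (by simp [IsReduced]) cs.wordProd_nil
  rw [List.sublist_nil.mp hm, wordProd_nil]

theorem BruhatLE.simple_mul {u v : W} {i : B} (h : cs.BruhatLE u v) (hu : cs.IsLeftDescent u i)
    (hv : cs.IsLeftDescent v i) : cs.BruhatLE (s i * u) (s i * v) := by
  obtain ⟨ω, hω, hprod⟩ := cs.exists_isReduced (s i * v)
  obtain ⟨hω', hω'prod⟩ := isReduced_cons_of_isLeftDescent hv hω hprod.symm
  obtain ⟨m, hm, rfl⟩ := h.exists_sublist hω' hω'prod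
  rw [hprod]
  rcases List.sublist_cons_iff.mp hm with hm | ⟨m', rfl, hm'⟩
  · obtain ⟨j, -, hj⟩ := cs.exists_eraseIdx_of_isLeftDescent hu
    rw [← hj]
    exact bruhatLE_of_sublist hω ((List.eraseIdx_sublist m j).trans hm)
  · rw [wordProd_cons, simple_mul_simple_cancel_left]
    exact bruhatLE_of_sublist hω hm'

theorem BruhatLE.le_simple_mul {u v : W} {i : B} (h : cs.BruhatLE u v)
    (hu : ¬ cs.IsLeftDescent u i) (hv : cs.IsLeftDescent v i) : cs.BruhatLE u (s i * v) := by
  obtain ⟨ω, hω, hprod⟩ := cs.exists_isReduced (s i * v)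
  obtain ⟨hω', hω'prod⟩ := isReduced_cons_of_isLeftDescent hv hω hprod.symm
  obtain ⟨m, hm, rfl⟩ := h.exists_sublist hω' hω'prod
  obtain ⟨ρ, hsub, hρ, hρprod⟩ := cs.exists_isReduced_sublist m
  rw [hprod, ← hρprod]
  rcases List.sublist_cons_iff.mp (hsub.trans hm) with hρω | ⟨ρ, rfl, -⟩
  · exact bruhatLE_of_sublist hω hρω
  · -- a reduced word `i :: ρ` for `u` would make `i` a left descent of `u`
    exfalso
    apply hu
    have hlen := hρ.eq
    have := cs.length_wordProd_le ρ
    rw [wordProd_cons, List.length_cons] at hlen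
    rw [← hρprod, IsLeftDescent, wordProd_cons, simple_mul_simple_cancel_left]
    omega

end CoxeterSystem

section Sorting

theorem exists_le_gammaLetter_eq (j : Fin n) (k : ℕ) : ∃ q, k ≤ q ∧ gammaLetter n q = j := by
  refine ⟨k * n + j, ?_, Fin.ext ?_⟩
  · have : k ≤ k * n := Nat.le_mul_of_pos_right k (NeZero.pos n)
    omega
  · simp [gammaLetter, Nat.mod_eq_of_lt j.isLt]

theorem mem_of_gammaLetter_eq {S : Set ℕ} {k : ℕ} (hS : ∀ q, k ≤ q → q + n ∈ S → q ∈ S)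
    {q x : ℕ} (hkq : k ≤ q) (hqx : q ≤ x) (hl : gammaLetter n x = gammaLetter n q) (hx : x ∈ S) :
    q ∈ S := by
  obtain ⟨t, rfl⟩ : ∃ t, x = q + t * n := by
    have hmod : q ≡ x [MOD n] := (congrArg Fin.val hl).symm
    obtain ⟨t, ht⟩ := (Nat.modEq_iff_dvd' hqx).mp hmod
    exact ⟨t, by rw [mul_comm]; omega⟩
  clear hqx hl
  induction t with
  | zero => simpa using hx
  | succ t ih => exact ih (hS _ (by omega) (by rwa [add_mul, one_mul, ← add_assoc] at hx))

variable (cs : CoxeterSystem M W)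

def IsReducedSubwordFrom (k : ℕ) (w : W) (L : List ℕ) : Prop :=
  L.Pairwise (· < ·) ∧ (∀ q ∈ L, k ≤ q) ∧ cs.IsReduced (L.map (gammaLetter n)) ∧
    cs.wordProd (L.map (gammaLetter n)) = w

/-- For `k = 0` and `L = A.sort (· ≤ ·)` this is `IsSortingPositions cs w A`; general `k` is
needed because the sorting word of `w` beginning at position `p` continues with the sorting word
of `s_p w` from `p + 1` on. -/
def IsSortingWordFrom (k : ℕ) (w : W) (L : List ℕ) : Prop :=
  IsReducedSubwordFrom cs k w L ∧
    ∀ L', IsReducedSubwordFrom cs k w L' → ¬ List.Lex (· < ·) L' L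

theorem exists_isReducedSubwordFrom (k : ℕ) (w : W) : ∃ L, IsReducedSubwordFrom cs k w L := by
  obtain ⟨ω, hω, rfl⟩ := cs.exists_isReduced w
  suffices ∃ L : List ℕ, L.Pairwise (· < ·) ∧ (∀ q ∈ L, k ≤ q) ∧ L.map (gammaLetter n) = ω by
    obtain ⟨L, hL, hk, rfl⟩ := this
    exact ⟨L, hL, hk, hω, rfl⟩
  induction ω generalizing k with
  | nil => exact ⟨[], by simp⟩
  | cons j ω ih =>
    obtain ⟨q, hkq, rfl⟩ := exists_le_gammaLetter_eq j k
    obtain ⟨L, hL, hk, rfl⟩ := ih (q + 1) (hω.drop 1)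
    refine ⟨q :: L, List.pairwise_cons.mpr ⟨fun p hp => hk p hp, hL⟩, ?_, rfl⟩
    simp only [List.mem_cons, forall_eq_or_imp]
    exact ⟨hkq, fun p hp => by have := hk p hp; omega⟩

variable {cs}

theorem IsReducedSubwordFrom.length_eq {k : ℕ} {w : W} {L : List ℕ}
    (h : IsReducedSubwordFrom cs k w L) : L.length = cs.length w := by
  rw [← h.2.2.2, h.2.2.1.eq, List.length_map]

theorem isReducedSubwordFrom_cons_iff {k p : ℕ} {w : W} {L : List ℕ} :
    IsReducedSubwordFrom cs k w (p :: L) ↔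
      k ≤ p ∧ cs.IsLeftDescent w (gammaLetter n p) ∧
        IsReducedSubwordFrom cs (p + 1) (cs.simple (gammaLetter n p) * w) L := by
  constructor
  · rintro ⟨hL, hk, hred, rfl⟩
    rw [List.pairwise_cons] at hL
    have hred' : cs.IsReduced (L.map (gammaLetter n)) := by simpa using hred.drop 1
    rw [List.map_cons, cs.isReduced_cons_iff hred'] at hred
    simp only [List.map_cons, cs.wordProd_cons, cs.simple_mul_simple_cancel_left]
    refine ⟨hk p List.mem_cons_self, ?_, hL.2, hL.1, hred', rfl⟩
    rwa [cs.isLeftDescent_iff_not_isLeftDescent_mul, cs.simple_mul_simple_cancel_left]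
  · rintro ⟨hkp, hp, hL, hLk, hLred, hLprod⟩
    refine ⟨List.pairwise_cons.mpr ⟨hLk, hL⟩, ?_, ?_, ?_⟩
    · simp only [List.mem_cons, forall_eq_or_imp]
      exact ⟨hkp, fun q hq => by have := hLk q hq; omega⟩
    · rwa [List.map_cons, cs.isReduced_cons_iff hLred, hLprod,
        ← cs.isLeftDescent_iff_not_isLeftDescent_mul]
    · rw [List.map_cons, cs.wordProd_cons, hLprod, cs.simple_mul_simple_cancel_left]

theorem IsReducedSubwordFrom.le_of_forall_not_isLeftDescent {k k' : ℕ} {w : W} {L : List ℕ}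
    (h : IsReducedSubwordFrom cs k w L)
    (hk' : ∀ q, k ≤ q → q < k' → ¬ cs.IsLeftDescent w (gammaLetter n q)) : ∀ q ∈ L, k' ≤ q := by
  cases L with
  | nil => simp
  | cons p L =>
    obtain ⟨hkp, hp, -, hL, -⟩ := isReducedSubwordFrom_cons_iff.mp h
    have hk'p : k' ≤ p := not_lt.mp fun hlt => hk' p hkp hlt hp
    simp only [List.mem_cons, forall_eq_or_imp]
    exact ⟨hk'p, fun q hq => by have := hL q hq; omega⟩

/-- A left descent of `u ≤ v` is a letter of the word of `v`, hence, the blocks of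
`v` being decreasing, occurs in the word of `v` no later than anywhere else in `γ^∞`. -/
theorem IsReducedSubwordFrom.not_isLeftDescent_of_bruhatLE {k p : ℕ} {u v : W} {L : List ℕ}
    (hv : IsReducedSubwordFrom cs k v (p :: L)) (hblocks : ∀ q, k ≤ q → q + n ∈ p :: L → q ∈ p :: L)
    (huv : cs.BruhatLE u v) : ∀ q, k ≤ q → q < p → ¬ cs.IsLeftDescent u (gammaLetter n q) := by
  intro q hkq hqp hq
  have hge : ∀ x ∈ p :: L, p ≤ x := by
    intro x hx
    rcases List.mem_cons.mp hx with rfl | hx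
    · rfl
    · exact ((List.pairwise_cons.mp hv.1).1 x hx).le
  obtain ⟨m, hm, rfl⟩ := huv.exists_sublist hv.2.2.1 hv.2.2.2
  obtain ⟨x, hx, hxq⟩ := List.mem_map.mp (hm.subset (cs.mem_of_isLeftDescent hq))
  have hq' : q ∈ p :: L := mem_of_gammaLetter_eq (S := {x | x ∈ p :: L}) hblocks hkq
    (by have := hge x hx; omega) hxq hx
  have := hge q hq'
  omega

theorem IsSortingWordFrom.le_of_isLeftDescent {k p q : ℕ} {w : W} {L : List ℕ}
    (h : IsSortingWordFrom cs k w (p :: L)) (hkq : k ≤ q)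
    (hq : cs.IsLeftDescent w (gammaLetter n q)) : p ≤ q := by
  obtain ⟨L', hL'⟩ := exists_isReducedSubwordFrom cs (q + 1) (cs.simple (gammaLetter n q) * w)
  exact not_lt.mp fun hlt => h.2 (q :: L') (isReducedSubwordFrom_cons_iff.mpr ⟨hkq, hq, hL'⟩)
    (.rel hlt)

theorem IsSortingWordFrom.tail {k p : ℕ} {w : W} {L : List ℕ}
    (h : IsSortingWordFrom cs k w (p :: L)) :
    IsSortingWordFrom cs (p + 1) (cs.simple (gammaLetter n p) * w) L := by
  obtain ⟨hkp, hp, hL⟩ := isReducedSubwordFrom_cons_iff.mp h.1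
  exact ⟨hL, fun L' hL' hlex => h.2 (p :: L') (isReducedSubwordFrom_cons_iff.mpr ⟨hkp, hp, hL'⟩)
    (.cons hlex)⟩

theorem IsSortingWordFrom.mono {k k' : ℕ} {w : W} {L : List ℕ} (h : IsSortingWordFrom cs k w L)
    (hkk' : k ≤ k') (hL : ∀ q ∈ L, k' ≤ q) : IsSortingWordFrom cs k' w L :=
  ⟨⟨h.1.1, hL, h.1.2.2⟩,
    fun L' hL' => h.2 L' ⟨hL'.1, fun q hq => hkk'.trans (hL'.2.1 q hq), hL'.2.2⟩⟩

theorem IsSortingWordFrom.subset_of_bruhatLE {k : ℕ} {u v : W} {Lu Lv : List ℕ}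
    (hu : IsSortingWordFrom cs k u Lu) (hv : IsSortingWordFrom cs k v Lv)
    (hblocks : ∀ q, k ≤ q → q + n ∈ Lv → q ∈ Lv) (huv : cs.BruhatLE u v) : Lu ⊆ Lv := by
  induction Lv generalizing k u v Lu with
  | nil =>
    have hv1 : v = 1 := hv.1.2.2.2.symm
    subst hv1
    have hLu : Lu = [] := List.length_eq_zero_iff.mp (by
      rw [hu.1.length_eq, huv.eq_one, cs.length_one])
    simp [hLu]
  | cons p Lv ih =>
    obtain ⟨hkp, hp, -⟩ := isReducedSubwordFrom_cons_iff.mp hv.1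
    have hfirst := hv.1.not_isLeftDescent_of_bruhatLE hblocks huv
    have hblocks' : ∀ q, p + 1 ≤ q → q + n ∈ Lv → q ∈ Lv := by
      intro q hpq hq
      rcases List.mem_cons.mp (hblocks q (by omega) (List.mem_cons_of_mem p hq)) with rfl | h
      · omega
      · exact h
    by_cases hc : cs.IsLeftDescent u (gammaLetter n p)
    · cases Lu with
      | nil => exact absurd hc (hu.1.2.2.2 ▸ cs.not_isLeftDescent_one _)
      | cons p' Lu =>
        obtain ⟨hkp', hp', -⟩ := isReducedSubwordFrom_cons_iff.mp hu.1
        obtain rfl : p' = p := le_antisymm (hu.le_of_isLeftDescent hkp hc)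
          (not_lt.mp fun h => hfirst p' hkp' h hp')
        exact List.cons_subset_cons _ (ih hu.tail hv.tail hblocks' (huv.simple_mul hc hp))
    · have hnot : ∀ q, k ≤ q → q < p + 1 → ¬ cs.IsLeftDescent u (gammaLetter n q) := by
        intro q hkq hqp
        rcases Nat.lt_or_eq_of_le (Nat.le_of_lt_succ hqp) with hqp | rfl
        · exact hfirst q hkq hqp
        · exact hc
      have hu' := hu.mono (by omega) (hu.1.le_of_forall_not_isLeftDescent hnot)
      exact List.Subset.trans (ih hu' hv.tail hblocks' (huv.le_simple_mul hc hp))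
        (List.subset_cons_self _ _)

theorem IsSortingPositions.isSortingWordFrom {w : W} {A : Finset ℕ}
    (h : IsSortingPositions cs w A) : IsSortingWordFrom cs 0 w (A.sort (· ≤ ·)) := by
  refine ⟨⟨(Finset.sortedLT_sort A).pairwise, fun _ _ => Nat.zero_le _, h.1, h.2.1⟩,
    fun L hL hlex => ?_⟩
  have hsort : L.toFinset.sort (· ≤ ·) = L :=
    (List.toFinset_sort _ hL.1.nodup).mpr (hL.1.imp le_of_lt)
  exact h.2.2 L.toFinset (by rw [subwordOf, hsort]; exact hL.2.2.1)
    (by rw [subwordOf, hsort]; exact hL.2.2.2) (by rwa [hsort])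

end Sorting

theorem stmt12_general (cs : CoxeterSystem M W) (u v : W) (Au Av : Finset ℕ)
    (hu : IsSortingPositions cs u Au)
    (hv : IsSortingPositions cs v Av) (hv' : BlocksDecreasing n Av) :
    Bruhat cs u v ↔ Au ⊆ Av := by
  constructor
  · rintro ⟨l, hl, rfl, l', hsub, rfl⟩ x hx
    have hblocks : ∀ q, 0 ≤ q → q + n ∈ Av.sort (· ≤ ·) → q ∈ Av.sort (· ≤ ·) := by
      simpa using fun q => hv' q
    simpa using hu.isSortingWordFrom.subset_of_bruhatLE hv.isSortingWordFrom hblocks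
      (CoxeterSystem.bruhatLE_of_sublist hl hsub) ((Finset.mem_sort _).mpr hx)
  · intro hsub
    refine ⟨subwordOf n Av, hv.1, hv.2.1, subwordOf n Au, List.Sublist.map _ ?_, hu.2.1⟩
    refine List.sublist_of_subperm_of_pairwise (List.subperm_of_subset (Finset.sort_nodup _ _) ?_)
      (Finset.pairwise_sort _ _) (Finset.pairwise_sort _ _)
    intro x hx
    simpa using hsub (by simpa using hx)

/-- For `γ`-sortable elements `u`, `v`, we have `u ≤_B v` if and only if
`α_γ(u) ⊆ α_γ(v)`. -/
theorem stmt12 (cs : CoxeterSystem M W) (u v : W) (Au Av : Finset ℕ)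
    (hu : IsSortingPositions cs u Au) (hu' : BlocksDecreasing n Au)
    (hv : IsSortingPositions cs v Av) (hv' : BlocksDecreasing n Av) :
    Bruhat cs u v ↔ Au ⊆ Av :=
  stmt12_general cs u v Au Av hu hv hv'
end
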